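/- arXiv:2101.00649 — 8 statements merged into one kernel-verified Lean document; each statement's English description precedes it below -/
import Mathlib

section
/- Let A ∈ ℝ^{d×d} be Hurwitz. Then there exist a symmetric positive definite matrix P ∈ ℝ^{d×d} and a scalar λ > 0 such that for every t ≥ 0 and every ξ ∈ ℝ^d, (exp(t·A)·ξ)ᵀ P (exp(t·A)·ξ) ≤ exp(−λ·t) · ξᵀPξ, where exp denotes the matrix exponential. -/
open Matrix

/-- A real square matrix is Hurwitz if every root in `ℂ` of its characteristic
polynomial has strictly negative real part. -/
def IsHurwitz {d : ℕ} (M : Matrix (Fin d) (Fin d) ℝ) : Prop :=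
  ∀ μ ∈ (Matrix.charpoly (M.map Complex.ofReal)).roots, μ.re < 0

/-!
Pick `b > 0` with `Re μ < -b` for every eigenvalue `μ` of `A`. Decomposing `ℂⁿ` into generalized
eigenspaces, `exp (t • A)` acts on the one of `μ` as `e^{tμ}` times a polynomial in `t`, so
`‖exp (t • A)‖ = O(e^{-bt})`. Hence `P = ∫₀^∞ e^{bs} exp (s • A)ᵀ exp (s • A) ds` converges; it is
positive definite because `exp (s • A)` is invertible, and substituting `u = s + t` gives
`ξₜᵀ P ξₜ = e^{-bt} ∫ₜ^∞ e^{bu} ‖exp (u • A) ξ‖² du ≤ e^{-bt} ξᵀ P ξ` for `ξₜ = exp (t • A) ξ`.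
-/

open NormedSpace Asymptotics Filter MeasureTheory Set

theorem isBigO_pow_mul_exp_atTop {a c : ℝ} (h : a < c) (j : ℕ) :
    (fun t => t ^ j * Real.exp (a * t)) =O[atTop] fun t => Real.exp (c * t) :=
  ((isLittleO_pow_exp_pos_mul_atTop j (sub_pos.2 h)).isBigO.mul (isBigO_refl _ _)).congr_right
    fun t => by rw [← Real.exp_add]; ring_nf

theorem integral_Ioi_comp_add_right {E : Type*} [NormedAddCommGroup E] [NormedSpace ℝ E]
    (f : ℝ → E) (a t : ℝ) : ∫ s in Ioi a, f (s + t) = ∫ s in Ioi (a + t), f s := by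
  have h := (measurePreserving_add_right volume t).setIntegral_preimage_emb
    (measurableEmbedding_addRight t) f (Ioi (a + t))
  rwa [preimage_add_const_Ioi, add_sub_cancel_right] at h

theorem Matrix.dotProduct_self_nonneg {n R : Type*} [Fintype n] [Ring R] [LinearOrder R]
    [IsStrictOrderedRing R] (v : n → R) : 0 ≤ v ⬝ᵥ v :=
  Finset.sum_nonneg fun i _ => mul_self_nonneg (v i)

theorem Matrix.dotProduct_transpose_mul_mulVec {m n R : Type*} [Fintype m] [Fintype n]
    [CommSemiring R] (B : Matrix m n R) (ξ ζ : n → R) :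
    ξ ⬝ᵥ (Bᵀ * B) *ᵥ ζ = B *ᵥ ξ ⬝ᵥ B *ᵥ ζ := by
  rw [← mulVec_mulVec, dotProduct_mulVec, vecMul_transpose]

theorem Matrix.spectrum_transpose {n K : Type*} [Fintype n] [DecidableEq n] [Field K]
    (M : Matrix n n K) : spectrum K Mᵀ = spectrum K M := by
  ext μ
  rw [mem_spectrum_iff_isRoot_charpoly, mem_spectrum_iff_isRoot_charpoly, charpoly_transpose]

theorem Matrix.mem_spectrum_of_mem_maxGenEigenspace {n K : Type*} [Fintype n] [DecidableEq n]
    [Field K] {M : Matrix n n K} {μ : K} {v : n → K}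
    (hv : v ∈ Module.End.maxGenEigenspace (toLin' M) μ) (hv0 : v ≠ 0) : μ ∈ spectrum K M := by
  obtain ⟨k, hk⟩ := (Module.End.mem_maxGenEigenspace _ _ _).1 hv
  rw [← spectrum_toLin']
  refine (Module.End.hasEigenvalue_of_hasGenEigenvalue (k := k) ?_).mem_spectrum
  exact (Submodule.ne_bot_iff _).2 ⟨v, Module.End.mem_genEigenspace_nat.2 hk, hv0⟩

theorem IsHurwitz.exists_forall_re_lt {d : ℕ} {A : Matrix (Fin d) (Fin d) ℝ} (hA : IsHurwitz A) :
    ∃ b > 0, ∀ μ ∈ spectrum ℂ (A.map Complex.ofReal), μ.re < -b := by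
  have hroots : ∀ᶠ b in nhdsWithin (0 : ℝ) (Ioi 0),
      ∀ μ ∈ (A.map Complex.ofReal).charpoly.roots.toFinset, μ.re < -b :=
    (eventually_all_finset _).2 fun μ hμ =>
      ((continuous_neg.tendsto' 0 0 neg_zero).mono_left nhdsWithin_le_nhds).eventually
        (lt_mem_nhds (hA μ (Multiset.mem_toFinset.1 hμ)))
  obtain ⟨b, hlt, hb⟩ := (hroots.and self_mem_nhdsWithin).exists
  refine ⟨b, hb, fun μ hμ => hlt μ ?_⟩
  rwa [Multiset.mem_toFinset, Polynomial.mem_roots (charpoly_monic _).ne_zero,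
    ← mem_spectrum_iff_isRoot_charpoly]

section LinftyOpNorm

attribute [local instance] Matrix.linftyOpNormedAddCommGroup Matrix.linftyOpNormedSpace
  Matrix.linftyOpNormedRing Matrix.linftyOpNormedAlgebra

/- The topology of this norm is the product topology only up to unfolding instances, so the
`ContinuousENorm` instance needed by the Bochner integral has to be supplied by hand. -/
noncomputable abbrev Matrix.linftyOpContinuousENorm {m n α : Type*} [Fintype m] [Fintype n]
    [NormedAddCommGroup α] : ContinuousENorm (Matrix m n α) :=
  SeminormedAddGroup.toContinuousENorm

attribute [local instance] Matrix.linftyOpContinuousENorm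

theorem Matrix.linfty_opNorm_le_sum_norm_col {m n α : Type*} [Fintype m] [Fintype n]
    [NormedAddCommGroup α] (A : Matrix m n α) : ‖A‖ ≤ ∑ j, ‖A.col j‖ := by
  have : ‖A‖₊ ≤ ∑ j, ‖A.col j‖₊ := by
    rw [linfty_opNNNorm_def]
    exact Finset.sup_le fun i _ => Finset.sum_le_sum fun j _ => norm_le_pi_norm (A.col j) i
  simpa using NNReal.coe_le_coe.2 this

noncomputable def Matrix.dotProductMulVecCLM {m n 𝕜 : Type*} [Fintype m] [Fintype n] [RCLike 𝕜]
    (ξ : m → 𝕜) (ζ : n → 𝕜) : Matrix m n 𝕜 →L[𝕜] 𝕜 :=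
  LinearMap.toContinuousLinearMap
    { toFun Q := ξ ⬝ᵥ Q *ᵥ ζ
      map_add' Q R := by simp only [add_mulVec, dotProduct_add]
      map_smul' c Q := by simp only [smul_mulVec, dotProduct_smul, RingHom.id_apply] }

theorem Matrix.dotProduct_integral_mulVec {m n X 𝕜 : Type*} [Fintype m] [Fintype n] [RCLike 𝕜]
    [MeasurableSpace X] {μ : Measure X} {f : X → Matrix m n 𝕜} (hf : Integrable f μ)
    (ξ : m → 𝕜) (ζ : n → 𝕜) :
    ξ ⬝ᵥ (∫ x, f x ∂μ) *ᵥ ζ = ∫ x, ξ ⬝ᵥ f x *ᵥ ζ ∂μ :=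
  ((dotProductMulVecCLM ξ ζ).integral_comp_comm hf).symm

theorem MeasureTheory.Integrable.dotProduct_mulVec {m n X 𝕜 : Type*} [Fintype m] [Fintype n]
    [RCLike 𝕜] [MeasurableSpace X] {μ : Measure X} {f : X → Matrix m n 𝕜} (hf : Integrable f μ)
    (ξ : m → 𝕜) (ζ : n → 𝕜) : Integrable (fun x => ξ ⬝ᵥ f x *ᵥ ζ) μ :=
  (dotProductMulVecCLM ξ ζ).integrable_comp hf

theorem Matrix.transpose_integral {m n X 𝕜 : Type*} [Fintype m] [Fintype n] [RCLike 𝕜]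
    [MeasurableSpace X] {μ : Measure X} {f : X → Matrix m n 𝕜} (hf : Integrable f μ) :
    (∫ x, f x ∂μ)ᵀ = ∫ x, (f x)ᵀ ∂μ :=
  ((transposeLinearEquiv m n 𝕜 𝕜).toLinearMap.toContinuousLinearMap.integral_comp_comm hf).symm

variable {n : Type*} [Fintype n] [DecidableEq n]

theorem Matrix.exp_mulVec_eq_sum_of_pow_mulVec_eq_zero {𝕂 : Type*} [RCLike 𝕂]
    (N : Matrix n n 𝕂) {k : ℕ} {v : n → 𝕂} (hv : N ^ k *ᵥ v = 0) :
    exp N *ᵥ v = ∑ j ∈ Finset.range k, (j.factorial : 𝕂)⁻¹ • (N ^ j *ᵥ v) := by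
  have hsum : HasSum (fun j => (j.factorial : 𝕂)⁻¹ • (N ^ j *ᵥ v)) (exp N *ᵥ v) := by
    rw [exp_eq_tsum 𝕂]
    have h := (expSeries_summable' (𝕂 := 𝕂) N).hasSum.mapL
      ((mulVecBilin 𝕂 𝕂).flip v).toContinuousLinearMap
    simp only [LinearMap.coe_toContinuousLinearMap', LinearMap.flip_apply, mulVecBilin_apply,
      smul_mulVec] at h
    exact h
  refine hsum.unique (hasSum_sum_of_ne_finset_zero fun j hj => ?_)
  obtain ⟨i, rfl⟩ := Nat.exists_eq_add_of_le (by simpa using hj : k ≤ j)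
  rw [add_comm, pow_add, ← mulVec_mulVec, hv, mulVec_zero, smul_zero]

theorem Matrix.exp_smul_mulVec_of_pow_sub_mulVec_eq_zero (M : Matrix n n ℂ) (μ c : ℂ) {k : ℕ}
    {v : n → ℂ} (hv : (M - μ • 1) ^ k *ᵥ v = 0) :
    exp (c • M) *ᵥ v = Complex.exp (c * μ) •
      ∑ j ∈ Finset.range k, (c ^ j / j.factorial) • ((M - μ • 1) ^ j *ᵥ v) := by
  set N := M - μ • 1
  have hsplit : c • M = algebraMap ℂ _ (c * μ) + c • N := by
    rw [Algebra.algebraMap_eq_smul_one, smul_sub, mul_smul]; abel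
  have hcN : (c • N) ^ k *ᵥ v = 0 := by rw [smul_pow, smul_mulVec, hv, smul_zero]
  have hexp : exp (algebraMap ℂ (Matrix n n ℂ) (c * μ)) = algebraMap ℂ _ (exp (c * μ)) :=
    (algebraMap_exp_comm _).symm
  rw [hsplit, exp_add_of_commute _ _ (Algebra.commute_algebraMap_left _ _), hexp,
    ← Complex.exp_eq_exp_ℂ, Algebra.algebraMap_eq_smul_one, smul_mul_assoc, one_mul, smul_mulVec,
    exp_mulVec_eq_sum_of_pow_mulVec_eq_zero _ hcN]
  congr 1
  refine Finset.sum_congr rfl fun j _ => ?_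
  rw [smul_pow, smul_mulVec, smul_smul, div_eq_inv_mul]

theorem Matrix.isBigO_exp_ofReal_smul_mulVec_of_mem_maxGenEigenspace {M : Matrix n n ℂ} {μ : ℂ}
    {b : ℝ} (hμ : μ.re < -b) {v : n → ℂ} (hv : v ∈ Module.End.maxGenEigenspace (toLin' M) μ) :
    (fun t : ℝ => exp ((t : ℂ) • M) *ᵥ v) =O[atTop] fun t => Real.exp (-b * t) := by
  obtain ⟨k, hk⟩ := (Module.End.mem_maxGenEigenspace _ _ _).1 hv
  have hk' : (M - μ • 1) ^ k *ᵥ v = 0 := by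
    rw [← toLinAlgEquiv'_apply, map_pow, map_sub, map_smul, map_one]
    exact hk
  simp_rw [exp_smul_mulVec_of_pow_sub_mulVec_eq_zero M μ _ hk', Finset.smul_sum, smul_smul]
  refine IsBigO.fun_sum fun j _ => ?_
  have hscalar : (fun t : ℝ => Complex.exp (t * μ) * ((t : ℂ) ^ j / j.factorial))
      =O[atTop] fun t => t ^ j * Real.exp (μ.re * t) :=
    isBigO_of_le _ fun t => by
      simp only [norm_mul, norm_div, norm_pow, Complex.norm_exp, Complex.re_ofReal_mul,
        Complex.norm_real, Complex.norm_natCast, Real.norm_eq_abs, abs_of_pos (Real.exp_pos _)]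
      rw [mul_comm, mul_comm t]
      gcongr
      exact div_le_self (by positivity) (by exact_mod_cast j.factorial_pos)
  exact ((isBigO_of_le' _ fun t => by rw [norm_smul, mul_comm]).trans hscalar).trans
    (isBigO_pow_mul_exp_atTop hμ j)

theorem Matrix.isBigO_exp_ofReal_smul_mulVec {M : Matrix n n ℂ} {b : ℝ}
    (hM : ∀ μ ∈ spectrum ℂ M, μ.re < -b) (v : n → ℂ) :
    (fun t : ℝ => exp ((t : ℂ) • M) *ᵥ v) =O[atTop] fun t => Real.exp (-b * t) := by
  have hv : v ∈ ⨆ μ, Module.End.maxGenEigenspace (toLin' M) μ := by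
    rw [Module.End.iSup_maxGenEigenspace_eq_top]; trivial
  refine Submodule.iSup_induction _
    (motive := fun v : n → ℂ =>
      (fun t : ℝ => exp ((t : ℂ) • M) *ᵥ v) =O[atTop] fun t => Real.exp (-b * t))
    hv (fun μ v hv => ?_) (by simp only [mulVec_zero]; exact isBigO_zero _ _)
    fun v w hv hw => by simpa only [mulVec_add] using hv.add hw
  rcases eq_or_ne v 0 with rfl | hv0
  · simp only [mulVec_zero]; exact isBigO_zero _ _
  · exact isBigO_exp_ofReal_smul_mulVec_of_mem_maxGenEigenspace
      (hM μ (mem_spectrum_of_mem_maxGenEigenspace hv hv0)) hv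

theorem Matrix.isBigO_exp_smul_mulVec {A : Matrix n n ℝ} {b : ℝ}
    (hA : ∀ μ ∈ spectrum ℂ (A.map Complex.ofReal), μ.re < -b) (ξ : n → ℝ) :
    (fun t : ℝ => exp (t • A) *ᵥ ξ) =O[atTop] fun t => Real.exp (-b * t) := by
  have hmap (t : ℝ) :
      (exp (t • A)).map Complex.ofReal = exp ((t : ℂ) • A.map Complex.ofReal) := by
    have h := map_exp (Complex.ofRealHom.mapMatrix (m := n))
      (continuous_id.matrix_map Complex.continuous_ofReal) (t • A)
    exact h.trans (congrArg exp (by ext; simp))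
  have hcomplex (t : ℝ) : (fun i => ((exp (t • A) *ᵥ ξ) i : ℂ))
      = exp ((t : ℂ) • A.map Complex.ofReal) *ᵥ (fun i => (ξ i : ℂ)) := by
    funext i
    rw [← hmap]
    exact RingHom.map_mulVec Complex.ofRealHom _ _ i
  have hnorm (w : n → ℝ) : ‖(fun i => (w i : ℂ))‖ = ‖w‖ := by
    simp [Pi.norm_def, Complex.nnnorm_real]
  refine (isBigO_of_le _ fun t => ?_).trans (isBigO_exp_ofReal_smul_mulVec hA fun i => (ξ i : ℂ))
  rw [← hcomplex, hnorm]

theorem Matrix.isBigO_exp_smul {A : Matrix n n ℝ} {b : ℝ}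
    (hA : ∀ μ ∈ spectrum ℂ (A.map Complex.ofReal), μ.re < -b) :
    (fun t : ℝ => exp (t • A)) =O[atTop] fun t => Real.exp (-b * t) := by
  have hcols := IsBigO.fun_sum fun j (_ : j ∈ Finset.univ) =>
    (isBigO_exp_smul_mulVec hA (Pi.single j 1)).norm_left
  refine (isBigO_of_le _ fun t => ?_).trans hcols
  rw [Real.norm_of_nonneg (by positivity)]
  simpa [mulVec_single_one] using linfty_opNorm_le_sum_norm_col (exp (t • A))

theorem Matrix.continuous_exp_smul (A : Matrix n n ℝ) : Continuous fun t : ℝ => exp (t • A) :=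
  exp_continuous.comp (continuous_id.smul continuous_const)

theorem Matrix.exp_smul_mul_exp_smul (A : Matrix n n ℝ) (s t : ℝ) :
    exp (s • A) * exp (t • A) = exp ((s + t) • A) := by
  rw [add_smul, exp_add_of_commute _ _ (((Commute.refl A).smul_left s).smul_right t)]

variable (A : Matrix n n ℝ) (b : ℝ)

noncomputable def lyapunovMatrix : Matrix n n ℝ :=
  ∫ s in Ioi 0, Real.exp (b * s) • ((exp (s • A))ᵀ * exp (s • A))

variable {A b}

theorem integrableOn_lyapunovMatrix_integrand (hb : 0 < b)
    (hA : ∀ μ ∈ spectrum ℂ (A.map Complex.ofReal), μ.re < -b) :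
    IntegrableOn (fun s : ℝ => Real.exp (b * s) • ((exp (s • A))ᵀ * exp (s • A))) (Ioi 0) := by
  have hT : (fun s : ℝ => (exp (s • A))ᵀ) =O[atTop] fun s => Real.exp (-b * s) := by
    simpa only [← exp_transpose, transpose_smul] using
      isBigO_exp_smul (A := Aᵀ) (by rwa [transpose_map, spectrum_transpose])
  have hO : (fun s : ℝ => Real.exp (b * s) • ((exp (s • A))ᵀ * exp (s • A)))
      =O[atTop] fun s => Real.exp (-b * s) :=
    ((isBigO_refl _ atTop).smul (hT.mul (isBigO_exp_smul hA))).congr_right fun s => by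
      rw [smul_eq_mul, ← Real.exp_add, ← Real.exp_add]; ring_nf
  have hcont : Continuous fun s : ℝ => Real.exp (b * s) • ((exp (s • A))ᵀ * exp (s • A)) :=
    (Real.continuous_exp.comp (continuous_const_mul b)).smul
      ((continuous_exp_smul A).matrix_transpose.matrix_mul (continuous_exp_smul A))
  exact (integrableOn_Ici_iff_integrableOn_Ioi (by finiteness)).1
    ((hcont.continuousOn.locallyIntegrableOn measurableSet_Ici).integrableOn_of_isBigO_atTop hO
      ⟨Ioi b, Ioi_mem_atTop b, exp_neg_integrableOn_Ioi b hb⟩)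

theorem dotProduct_lyapunovMatrix_mulVec (hb : 0 < b)
    (hA : ∀ μ ∈ spectrum ℂ (A.map Complex.ofReal), μ.re < -b) (ξ ζ : n → ℝ) :
    ξ ⬝ᵥ lyapunovMatrix A b *ᵥ ζ =
      ∫ s in Ioi 0, Real.exp (b * s) * (exp (s • A) *ᵥ ξ ⬝ᵥ exp (s • A) *ᵥ ζ) := by
  rw [lyapunovMatrix, dotProduct_integral_mulVec (integrableOn_lyapunovMatrix_integrand hb hA)]
  simp only [smul_mulVec, dotProduct_smul, smul_eq_mul, dotProduct_transpose_mul_mulVec]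

theorem integrableOn_lyapunovMatrix_quadForm (hb : 0 < b)
    (hA : ∀ μ ∈ spectrum ℂ (A.map Complex.ofReal), μ.re < -b) (ξ : n → ℝ) :
    IntegrableOn (fun s : ℝ => Real.exp (b * s) * (exp (s • A) *ᵥ ξ ⬝ᵥ exp (s • A) *ᵥ ξ))
      (Ioi 0) := by
  have h := (integrableOn_lyapunovMatrix_integrand hb hA).dotProduct_mulVec ξ ξ
  simp only [smul_mulVec, dotProduct_smul, smul_eq_mul, dotProduct_transpose_mul_mulVec] at h
  exact h

theorem lyapunovMatrix_transpose (hb : 0 < b)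
    (hA : ∀ μ ∈ spectrum ℂ (A.map Complex.ofReal), μ.re < -b) :
    (lyapunovMatrix A b)ᵀ = lyapunovMatrix A b := by
  rw [lyapunovMatrix, transpose_integral (integrableOn_lyapunovMatrix_integrand hb hA)]
  simp only [transpose_smul, transpose_mul, transpose_transpose]

theorem posDef_lyapunovMatrix (hb : 0 < b)
    (hA : ∀ μ ∈ spectrum ℂ (A.map Complex.ofReal), μ.re < -b) :
    (lyapunovMatrix A b).PosDef := by
  refine .of_dotProduct_mulVec_pos (lyapunovMatrix_transpose hb hA) fun ξ hξ => ?_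
  have hpos (s : ℝ) : 0 < Real.exp (b * s) * (exp (s • A) *ᵥ ξ ⬝ᵥ exp (s • A) *ᵥ ξ) := by
    have hv : exp (s • A) *ᵥ ξ ≠ 0 := by
      simpa using (mulVec_injective_iff_isUnit.2 (Matrix.isUnit_exp (s • A))).ne hξ
    exact mul_pos (Real.exp_pos _) <|
      (dotProduct_self_nonneg _).lt_of_ne' (dotProduct_self_eq_zero.not.2 hv)
  rw [star_trivial, dotProduct_lyapunovMatrix_mulVec hb hA,
    setIntegral_pos_iff_support_of_nonneg_ae (ae_of_all _ fun s => (hpos s).le)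
      (integrableOn_lyapunovMatrix_quadForm hb hA ξ),
    Function.support_eq_univ fun s => (hpos s).ne', univ_inter, Real.volume_Ioi]
  exact ENNReal.zero_lt_top

theorem lyapunovMatrix_exp_smul_mulVec_le (hb : 0 < b)
    (hA : ∀ μ ∈ spectrum ℂ (A.map Complex.ofReal), μ.re < -b) {t : ℝ} (ht : 0 ≤ t) (ξ : n → ℝ) :
    exp (t • A) *ᵥ ξ ⬝ᵥ lyapunovMatrix A b *ᵥ (exp (t • A) *ᵥ ξ) ≤
      Real.exp (-b * t) * (ξ ⬝ᵥ lyapunovMatrix A b *ᵥ ξ) := by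
  set G : ℝ → ℝ := fun s => Real.exp (b * s) * (exp (s • A) *ᵥ ξ ⬝ᵥ exp (s • A) *ᵥ ξ)
  have hshift (s : ℝ) : Real.exp (b * s) *
      (exp (s • A) *ᵥ (exp (t • A) *ᵥ ξ) ⬝ᵥ exp (s • A) *ᵥ (exp (t • A) *ᵥ ξ)) =
      Real.exp (-b * t) * G (s + t) := by
    simp only [G, mulVec_mulVec, exp_smul_mul_exp_smul, ← mul_assoc, ← Real.exp_add]
    ring_nf
  calc _ = Real.exp (-b * t) * ∫ s in Ioi 0, G (s + t) := by
        simp only [dotProduct_lyapunovMatrix_mulVec hb hA, hshift, integral_const_mul]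
    _ = Real.exp (-b * t) * ∫ s in Ioi t, G s := by
        rw [integral_Ioi_comp_add_right, zero_add]
    _ ≤ Real.exp (-b * t) * ∫ s in Ioi 0, G s := by
        refine mul_le_mul_of_nonneg_left (setIntegral_mono_set
          (integrableOn_lyapunovMatrix_quadForm hb hA ξ) (ae_of_all _ fun s => ?_)
          (Ioi_subset_Ioi ht).eventuallyLE) (Real.exp_pos _).le
        exact mul_nonneg (Real.exp_pos _).le (dotProduct_self_nonneg _)
    _ = _ := by rw [dotProduct_lyapunovMatrix_mulVec hb hA]

end LinftyOpNorm

theorem stmt_1 {d : ℕ} (A : Matrix (Fin d) (Fin d) ℝ) (hHur : IsHurwitz A) :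
    ∃ (P : Matrix (Fin d) (Fin d) ℝ) (lam : ℝ), P.PosDef ∧ 0 < lam ∧
      ∀ t : ℝ, 0 ≤ t → ∀ ξ : Fin d → ℝ,
        (NormedSpace.exp (t • A)).mulVec ξ ⬝ᵥ P.mulVec ((NormedSpace.exp (t • A)).mulVec ξ)
          ≤ Real.exp (-lam * t) * (ξ ⬝ᵥ P.mulVec ξ) := by
  obtain ⟨b, hb, hA⟩ := hHur.exists_forall_re_lt
  exact ⟨lyapunovMatrix A b, b, posDef_lyapunovMatrix hb hA, hb,
    fun t ht ξ => lyapunovMatrix_exp_smul_mulVec_le hb hA ht ξ⟩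
end

section
/- Let A, P, Q ∈ ℝ^{d×d} with P and Q symmetric positive definite, let ε ∈ ℝ, and suppose (A − ε·I_d)ᵀP + P(A − ε·I_d) + Q = 0. Then every function x : ℝ → ℝ^d satisfying HasDerivAt x (A.mulVec (x t)) t for all t obeys (x t)ᵀ P (x t) ≤ exp((2ε − λ_min(Q)/λ_max(P))·t) · (x 0)ᵀ P (x 0) for all t ≥ 0. -/
/-!
Along a solution of `ẋ = A x`, the Lyapunov function `V = xᵀ P x` has derivative
`xᵀ (AᵀP + PA) x = 2ε V - xᵀ Q x`. The Rayleigh bounds `xᵀ Q x ≥ λ_min(Q) |x|²` and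
`V ≤ λ_max(P) |x|²` turn this into the differential inequality
`V' ≤ (2ε - λ_min(Q) / λ_max(P)) V`, and Grönwall's inequality integrates it.
-/

open Matrix

open Set Real in
theorem le_mul_exp_of_deriv_right_le_mul {f f' : ℝ → ℝ} {K a b : ℝ}
    (hf : ContinuousOn f (Icc a b)) (hf' : ∀ x ∈ Ico a b, HasDerivWithinAt f (f' x) (Ici x) x)
    (bound : ∀ x ∈ Ico a b, f' x ≤ K * f x) :
    ∀ x ∈ Icc a b, f x ≤ f a * exp (K * (x - a)) := by
  intro x hx
  rw [← gronwallBound_ε0]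
  exact le_gronwallBound_of_liminf_deriv_right_le hf
    (fun x hx _ hr => (hf' x hx).liminf_right_slope_le hr) le_rfl
    (by simpa using bound) x hx

namespace Matrix

variable {n : Type*} [Fintype n]

theorem mulVec_dotProduct_mulVec_add_dotProduct_mulVec_mulVec {R : Type*} [CommSemiring R]
    (A P : Matrix n n R) (y : n → R) :
    (A *ᵥ y) ⬝ᵥ P *ᵥ y + y ⬝ᵥ P *ᵥ (A *ᵥ y) = y ⬝ᵥ (Aᵀ * P + P * A) *ᵥ y := by
  rw [add_mulVec, dotProduct_add, ← mulVec_mulVec, ← mulVec_mulVec, dotProduct_mulVec y Aᵀ,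
    vecMul_transpose]

theorem transpose_mul_add_mul_eq_smul_sub_of_lyapunov {R : Type*} [CommRing R] [DecidableEq n]
    {A P Q : Matrix n n R} {ε : R} (h : (A - ε • 1)ᵀ * P + P * (A - ε • 1) + Q = 0) :
    Aᵀ * P + P * A = (2 * ε) • P - Q := by
  rw [← sub_eq_zero, ← h]
  simp only [transpose_sub, transpose_smul, transpose_one, sub_mul, mul_sub,
    Matrix.smul_mul, Matrix.mul_smul, one_mul, mul_one]
  module

variable [DecidableEq n]

section Rayleigh

open scoped MatrixOrder

variable {A : Matrix n n ℝ}

theorem IsHermitian.mul_dotProduct_le_dotProduct_mulVec (hA : A.IsHermitian) {c : ℝ}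
    (hc : ∀ i, c ≤ hA.eigenvalues i) (x : n → ℝ) : c * (x ⬝ᵥ x) ≤ x ⬝ᵥ A *ᵥ x := by
  have hle : algebraMap ℝ (Matrix n n ℝ) c ≤ A := by
    rw [algebraMap_le_iff_le_spectrum hA, hA.spectrum_real_eq_range_eigenvalues]
    rintro _ ⟨i, rfl⟩
    exact hc i
  simpa only [Algebra.algebraMap_eq_smul_one, sub_mulVec, smul_mulVec, one_mulVec, star_trivial,
    dotProduct_sub, dotProduct_smul, smul_eq_mul, sub_nonneg] using
    (le_iff.mp hle).dotProduct_mulVec_nonneg x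

theorem IsHermitian.dotProduct_mulVec_le_mul_dotProduct (hA : A.IsHermitian) {c : ℝ}
    (hc : ∀ i, hA.eigenvalues i ≤ c) (x : n → ℝ) : x ⬝ᵥ A *ᵥ x ≤ c * (x ⬝ᵥ x) := by
  have hle : A ≤ algebraMap ℝ (Matrix n n ℝ) c := by
    rw [le_algebraMap_iff_spectrum_le hA, hA.spectrum_real_eq_range_eigenvalues]
    rintro _ ⟨i, rfl⟩
    exact hc i
  simpa only [Algebra.algebraMap_eq_smul_one, sub_mulVec, smul_mulVec, one_mulVec, star_trivial,
    dotProduct_sub, dotProduct_smul, smul_eq_mul, sub_nonneg] using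
    (le_iff.mp hle).dotProduct_mulVec_nonneg x

end Rayleigh

theorem PosSemidef.iInf_eigenvalues_div_iSup_mul_le {P Q : Matrix n n ℝ} (hP : P.PosSemidef)
    (hQ : Q.PosSemidef) (y : n → ℝ) :
    (⨅ i, hQ.1.eigenvalues i) / (⨆ i, hP.1.eigenvalues i) * (y ⬝ᵥ P *ᵥ y) ≤ y ⬝ᵥ Q *ᵥ y := by
  set lQ := ⨅ i, hQ.1.eigenvalues i
  set lP := ⨆ i, hP.1.eigenvalues i
  have hlQ : 0 ≤ lQ := Real.iInf_nonneg hQ.eigenvalues_nonneg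
  have hlP : 0 ≤ lP := Real.iSup_nonneg hP.eigenvalues_nonneg
  rcases hlP.eq_or_lt with hlP0 | hlP
  · simpa [← hlP0] using hQ.dotProduct_mulVec_nonneg y
  calc lQ / lP * (y ⬝ᵥ P *ᵥ y)
      ≤ lQ / lP * (lP * (y ⬝ᵥ y)) := by
        gcongr
        exact hP.1.dotProduct_mulVec_le_mul_dotProduct
          (fun i => le_ciSup (Finite.bddAbove_range _) i) y
    _ = lQ * (y ⬝ᵥ y) := by field_simp
    _ ≤ y ⬝ᵥ Q *ᵥ y :=
        hQ.1.mul_dotProduct_le_dotProduct_mulVec (fun i => ciInf_le (Finite.bddBelow_range _) i) y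

end Matrix

theorem HasDerivAt.dotProduct_mulVec_self {n : Type*} [Fintype n] {x : ℝ → n → ℝ}
    {x' : n → ℝ} {t : ℝ} (M : Matrix n n ℝ) (hx : HasDerivAt x x' t) :
    HasDerivAt (fun s => x s ⬝ᵥ M *ᵥ x s) (x' ⬝ᵥ M *ᵥ x t + x t ⬝ᵥ M *ᵥ x') t := by
  have hMx : HasDerivAt (fun s => M *ᵥ x s) (M *ᵥ x') t :=
    (Matrix.mulVecLin M).toContinuousLinearMap.hasFDerivAt.comp_hasDerivAt t hx
  have hcoord := fun i => (hasDerivAt_pi.1 hx i).fun_mul (hasDerivAt_pi.1 hMx i)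
  simpa only [dotProduct, ← Finset.sum_add_distrib] using
    HasDerivAt.fun_sum fun i (_ : i ∈ Finset.univ) => hcoord i

theorem stmt_6 {d : ℕ} (A P Q : Matrix (Fin d) (Fin d) ℝ) (ε : ℝ)
    (hP : P.PosDef) (hQ : Q.PosDef)
    (hLyap : (A - ε • (1 : Matrix (Fin d) (Fin d) ℝ))ᵀ * P +
        P * (A - ε • (1 : Matrix (Fin d) (Fin d) ℝ)) + Q = 0) :
    ∀ x : ℝ → Fin d → ℝ, (∀ t : ℝ, HasDerivAt x (A.mulVec (x t)) t) →
      ∀ t : ℝ, 0 ≤ t →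
        x t ⬝ᵥ P.mulVec (x t) ≤
          Real.exp ((2 * ε - (⨅ i, hQ.1.eigenvalues i) / (⨆ i, hP.1.eigenvalues i)) * t) *
            (x 0 ⬝ᵥ P.mulVec (x 0)) := by
  intro x hx t ht
  set V : ℝ → ℝ := fun s => x s ⬝ᵥ P *ᵥ x s
  have hV (s : ℝ) : HasDerivAt V (x s ⬝ᵥ ((2 * ε) • P - Q) *ᵥ x s) s := by
    simpa only [mulVec_dotProduct_mulVec_add_dotProduct_mulVec_mulVec,
      transpose_mul_add_mul_eq_smul_sub_of_lyapunov hLyap] using (hx s).dotProduct_mulVec_self P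
  have hbound (s : ℝ) : x s ⬝ᵥ ((2 * ε) • P - Q) *ᵥ x s ≤
      (2 * ε - (⨅ i, hQ.1.eigenvalues i) / (⨆ i, hP.1.eigenvalues i)) * V s := by
    have := hP.posSemidef.iInf_eigenvalues_div_iSup_mul_le hQ.posSemidef (x s)
    simp only [sub_mulVec, smul_mulVec, dotProduct_sub, dotProduct_smul, smul_eq_mul]
    linarith
  have := le_mul_exp_of_deriv_right_le_mul (fun s _ => (hV s).continuousAt.continuousWithinAt)
    (fun s _ => (hV s).hasDerivWithinAt) (fun s _ => hbound s) t ⟨ht, le_rfl⟩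
  rwa [sub_zero, mul_comm] at this
end

section
/- Let k ∈ ℕ and for each j ∈ {0, 1, …, k} let A_j ∈ ℝ^{d×d}, let P_j ∈ ℝ^{d×d} be symmetric positive definite, and let λ_j ∈ ℝ be such that for all t ≥ 0 and all ξ ∈ ℝ^d, (exp(t·A_j)·ξ)ᵀ P_j (exp(t·A_j)·ξ) ≤ exp(−λ_j·t)·ξᵀP_jξ. For each j ∈ {0, …, k−1} let μ_j ≥ 1 satisfy ξᵀP_{j+1}ξ ≤ μ_j · ξᵀP_jξ for all ξ ∈ ℝ^d. Let t_0, …, t_k ≥ 0 be durations and define the trajectory x_0 ∈ ℝ^d arbitrary, x_{j+1} := exp(t_j·A_j)·x_j. Then x_{k+1}ᵀ P_k x_{k+1} ≤ exp(−∑_{j=0}^{k} λ_j·t_j) · (∏_{j=0}^{k−1} μ_j) · x_0ᵀ P_0 x_0. -/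
/-!
Along the trajectory, the flow of mode `j` shrinks its Lyapunov function `ξᵀ P_j ξ` by the factor
`exp (-λ_j t_j)`, and switching from mode `j` to mode `j + 1` enlarges the current Lyapunov value by
at most `μ_j`. Chaining these estimates multiplies the factors, and the product of the exponentials is
the exponential of the sum.
-/

open Matrix

theorem Fin.le_prod_mul_of_succ_le_mul_castSucc {R : Type*} [CommMonoidWithZero R] [PartialOrder R]
    [PosMulMono R] {n : ℕ} {u : Fin (n + 1) → R} {r : Fin n → R} (hr : ∀ j, 0 ≤ r j)
    (hu : ∀ j, u j.succ ≤ r j * u j.castSucc) : u (Fin.last n) ≤ (∏ j, r j) * u 0 := by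
  induction n with
  | zero => simp
  | succ n ih =>
    have hinit : u (Fin.last n).castSucc ≤ (∏ j : Fin n, r j.castSucc) * u 0 :=
      ih (u := fun j => u j.castSucc) (fun j => hr _) (fun j => hu j.castSucc)
    calc u (Fin.last (n + 1)) ≤ r (Fin.last n) * u (Fin.last n).castSucc := hu (Fin.last n)
      _ ≤ r (Fin.last n) * ((∏ j : Fin n, r j.castSucc) * u 0) :=
        mul_le_mul_of_nonneg_left hinit (hr _)
      _ = (∏ j, r j) * u 0 := by
        rw [Fin.prod_univ_castSucc, mul_comm _ (r _), mul_assoc]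

theorem switched_lyapunov_le_prod_mul {E : Type*} {k : ℕ} (V : Fin (k + 1) → E → ℝ)
    (Φ : Fin (k + 1) → E → E) {c : Fin (k + 1) → ℝ} (hc : ∀ j, 0 ≤ c j)
    (hflow : ∀ j ξ, V j (Φ j ξ) ≤ c j * V j ξ) {μ : Fin k → ℝ} (hμ : ∀ j, 0 ≤ μ j)
    (hswitch : ∀ j ξ, V j.succ ξ ≤ μ j * V j.castSucc ξ) {x : ℕ → E}
    (hx : ∀ j : Fin (k + 1), x (j + 1) = Φ j (x j)) :
    V (Fin.last k) (x (k + 1)) ≤ (∏ j, c j) * (∏ j, μ j) * V 0 (x 0) := by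
  have hstep (j : Fin k) :
      V j.succ (x j.succ) ≤ μ j * c j.castSucc * V j.castSucc (x j.castSucc) := by
    calc V j.succ (x j.succ) ≤ μ j * V j.castSucc (x (j.castSucc + 1)) := hswitch j _
      _ ≤ μ j * (c j.castSucc * V j.castSucc (x j.castSucc)) := by
        rw [hx]
        exact mul_le_mul_of_nonneg_left (hflow _ _) (hμ j)
      _ = μ j * c j.castSucc * V j.castSucc (x j.castSucc) := (mul_assoc _ _ _).symm
  have hchain : V (Fin.last k) (x k) ≤ (∏ j : Fin k, μ j * c j.castSucc) * V 0 (x 0) :=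
    Fin.le_prod_mul_of_succ_le_mul_castSucc (u := fun j => V j (x j))
      (fun j => mul_nonneg (hμ j) (hc _)) hstep
  calc V (Fin.last k) (x (k + 1)) ≤ c (Fin.last k) * V (Fin.last k) (x k) := by
        have hlast := hx (Fin.last k)
        rw [Fin.val_last] at hlast
        exact hlast ▸ hflow _ _
    _ ≤ c (Fin.last k) * ((∏ j : Fin k, μ j * c j.castSucc) * V 0 (x 0)) :=
        mul_le_mul_of_nonneg_left hchain (hc _)
    _ = (∏ j, c j) * (∏ j, μ j) * V 0 (x 0) := by
        rw [Fin.prod_univ_castSucc c, Finset.prod_mul_distrib]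
        ring

theorem stmt_9_general {d k : ℕ}
    (A : Fin (k + 1) → Matrix (Fin d) (Fin d) ℝ)
    (P : Fin (k + 1) → Matrix (Fin d) (Fin d) ℝ)
    (lam : Fin (k + 1) → ℝ)
    (hdecay : ∀ j, ∀ t : ℝ, 0 ≤ t → ∀ ξ : Fin d → ℝ,
      (NormedSpace.exp (t • A j)).mulVec ξ ⬝ᵥ
          (P j).mulVec ((NormedSpace.exp (t • A j)).mulVec ξ)
        ≤ Real.exp (-lam j * t) * (ξ ⬝ᵥ (P j).mulVec ξ))
    (μ : Fin k → ℝ) (hμ1 : ∀ j, 1 ≤ μ j)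
    (hμ : ∀ j : Fin k, ∀ ξ : Fin d → ℝ,
      ξ ⬝ᵥ (P j.succ).mulVec ξ ≤ μ j * (ξ ⬝ᵥ (P j.castSucc).mulVec ξ))
    (t : Fin (k + 1) → ℝ) (ht : ∀ j, 0 ≤ t j)
    (x : ℕ → Fin d → ℝ)
    (hx : ∀ j : Fin (k + 1), x (j + 1) = (NormedSpace.exp (t j • A j)).mulVec (x j)) :
    x (k + 1) ⬝ᵥ (P (Fin.last k)).mulVec (x (k + 1)) ≤
      Real.exp (-(∑ j, lam j * t j)) * (∏ j, μ j) * (x 0 ⬝ᵥ (P 0).mulVec (x 0)) := by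
  have h := switched_lyapunov_le_prod_mul (fun j ξ => ξ ⬝ᵥ (P j).mulVec ξ)
    (fun j => (NormedSpace.exp (t j • A j)).mulVec) (fun j => (Real.exp_pos _).le)
    (fun j => hdecay j (t j) (ht j)) (fun j => zero_le_one.trans (hμ1 j)) hμ hx
  simpa only [← Real.exp_sum, neg_mul, Finset.sum_neg_distrib] using h

theorem stmt_9 {d k : ℕ}
    (A : Fin (k + 1) → Matrix (Fin d) (Fin d) ℝ)
    (P : Fin (k + 1) → Matrix (Fin d) (Fin d) ℝ)
    (lam : Fin (k + 1) → ℝ)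
    (hP : ∀ j, (P j).PosDef)
    (hdecay : ∀ j, ∀ t : ℝ, 0 ≤ t → ∀ ξ : Fin d → ℝ,
      (NormedSpace.exp (t • A j)).mulVec ξ ⬝ᵥ
          (P j).mulVec ((NormedSpace.exp (t • A j)).mulVec ξ)
        ≤ Real.exp (-lam j * t) * (ξ ⬝ᵥ (P j).mulVec ξ))
    (μ : Fin k → ℝ) (hμ1 : ∀ j, 1 ≤ μ j)
    (hμ : ∀ j : Fin k, ∀ ξ : Fin d → ℝ,
      ξ ⬝ᵥ (P j.succ).mulVec ξ ≤ μ j * (ξ ⬝ᵥ (P j.castSucc).mulVec ξ))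
    (t : Fin (k + 1) → ℝ) (ht : ∀ j, 0 ≤ t j)
    (x : ℕ → Fin d → ℝ)
    (hx : ∀ j : Fin (k + 1), x (j + 1) = (NormedSpace.exp (t j • A j)).mulVec (x j)) :
    x (k + 1) ⬝ᵥ (P (Fin.last k)).mulVec (x (k + 1)) ≤
      Real.exp (-(∑ j, lam j * t j)) * (∏ j, μ j) * (x 0 ⬝ᵥ (P 0).mulVec (x 0)) :=
  stmt_9_general A P lam hdecay μ hμ1 hμ t ht x hx
end

section
/- Let Λ be a nonempty finite type of modes. For each p ∈ Λ let A_p ∈ ℝ^{d×d}, let P_p ∈ ℝ^{d×d} be symmetric positive definite, and let λ_p ∈ ℝ be such that for all t ≥ 0 and all ξ ∈ ℝ^d, (exp(t·A_p)·ξ)ᵀ P_p (exp(t·A_p)·ξ) ≤ exp(−λ_p·t)·ξᵀP_pξ. For each pair p, q ∈ Λ let μ_{pq} ≥ 1 satisfy ξᵀP_qξ ≤ μ_{pq}·ξᵀP_pξ for all ξ ∈ ℝ^d. Let n ≥ 1, let v : Fin n → Λ be a cycle of modes, and let T_0, …, T_{n−1} > 0 be dwell times satisfying the T-contractivity condition ∑_{j=0}^{n−1}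 (−λ_{v_j}·T_j) + ∑_{j=0}^{n−1} ln μ_{v_j v_{(j+1) mod n}} < 0. Set ρ := exp(∑_{j=0}^{n−1} (−λ_{v_j}·T_j) + ∑_{j=0}^{n−1} ln μ_{v_j v_{(j+1) mod n}}) and M := exp(T_{n−1}·A_{v_{n−1}}) · ⋯ · exp(T_0·A_{v_0}). Then ρ < 1 and for every x ∈ ℝ^d and every m ∈ ℕ, (M^m x)ᵀ P_{v_0} (M^m x) ≤ ρ^m · xᵀ P_{v_0} x. -/
open Matrix

/-!
Each dwell on mode `p` for time `T` contracts the Lyapunov form `ξᵀ P_p ξ` by `exp (-λ_p T)`, and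
switching from `p` to `q` costs at most the factor `μ_{pq}` when passing to `ξᵀ P_q ξ`. Chaining these
estimates once around the cycle returns to the form of `v₀` with total factor `ρ`, and iterating the
cycle gives `ρ ^ m`.
-/

section QuadraticBounds

variable {ι R S : Type*} [Fintype ι] [DecidableEq ι] [Semiring R]
  [CommSemiring S] [PartialOrder S] [IsOrderedRing S]

theorem mulVec_reverse_prod_ofFn_le {n : ℕ} (q : ℕ → (ι → R) → S) (f : Fin n → Matrix ι ι R)
    (c : Fin n → S) (hc : ∀ j, 0 ≤ c j)
    (hstep : ∀ (j : Fin n) x, q (j + 1) (f j *ᵥ x) ≤ c j * q j x) (x : ι → R) :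
    q n ((List.ofFn f).reverse.prod *ᵥ x) ≤ (∏ j, c j) * q 0 x := by
  induction n with
  | zero => simp
  | succ n ih =>
    have hprefix := ih (fun j => f j.castSucc) (fun j => c j.castSucc) (fun j => hc _)
      (fun j => hstep j.castSucc)
    rw [List.ofFn_succ', List.concat_eq_append, List.reverse_append, List.reverse_singleton,
      List.singleton_append, List.prod_cons, ← mulVec_mulVec, Fin.prod_univ_castSucc]
    calc q (n + 1) (f (Fin.last n) *ᵥ (List.ofFn fun j => f j.castSucc).reverse.prod *ᵥ x)
        ≤ c (Fin.last n) * q n ((List.ofFn fun j => f j.castSucc).reverse.prod *ᵥ x) :=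
          hstep (Fin.last n) _
      _ ≤ c (Fin.last n) * ((∏ j : Fin n, c j.castSucc) * q 0 x) :=
          mul_le_mul_of_nonneg_left hprefix (hc _)
      _ = (∏ j : Fin n, c j.castSucc) * c (Fin.last n) * q 0 x := by ring

theorem mulVec_pow_le_pow_mul (q : (ι → R) → S) (M : Matrix ι ι R) {ρ : S} (hρ : 0 ≤ ρ)
    (hM : ∀ x, q (M *ᵥ x) ≤ ρ * q x) (x : ι → R) (m : ℕ) :
    q ((M ^ m) *ᵥ x) ≤ ρ ^ m * q x := by
  induction m with
  | zero => simp
  | succ m ih =>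
    calc q ((M ^ (m + 1)) *ᵥ x) = q (M *ᵥ (M ^ m) *ᵥ x) := by rw [pow_succ', mulVec_mulVec]
      _ ≤ ρ * q ((M ^ m) *ᵥ x) := hM _
      _ ≤ ρ * (ρ ^ m * q x) := mul_le_mul_of_nonneg_left ih hρ
      _ = ρ ^ (m + 1) * q x := by ring

end QuadraticBounds

open Fin.NatCast in
theorem stmt_11_general {d n : ℕ} [NeZero n] {Λ : Type}
    (A : Λ → Matrix (Fin d) (Fin d) ℝ)
    (P : Λ → Matrix (Fin d) (Fin d) ℝ)
    (lam : Λ → ℝ)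
    (hdecay : ∀ p, ∀ t : ℝ, 0 ≤ t → ∀ ξ : Fin d → ℝ,
      (NormedSpace.exp (t • A p)).mulVec ξ ⬝ᵥ
          (P p).mulVec ((NormedSpace.exp (t • A p)).mulVec ξ)
        ≤ Real.exp (-lam p * t) * (ξ ⬝ᵥ (P p).mulVec ξ))
    (μ : Λ → Λ → ℝ) (hμ1 : ∀ p q, 1 ≤ μ p q)
    (hμ : ∀ p q, ∀ ξ : Fin d → ℝ, ξ ⬝ᵥ (P q).mulVec ξ ≤ μ p q * (ξ ⬝ᵥ (P p).mulVec ξ))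
    (v : Fin n → Λ) (T : Fin n → ℝ) (hT : ∀ j, 0 < T j)
    (hcontract : ∑ j, (-lam (v j) * T j) + ∑ j, Real.log (μ (v j) (v (j + 1))) < 0) :
    Real.exp (∑ j, (-lam (v j) * T j) + ∑ j, Real.log (μ (v j) (v (j + 1)))) < 1 ∧
    ∀ (x : Fin d → ℝ) (m : ℕ),
      ((List.ofFn fun j : Fin n => NormedSpace.exp (T j • A (v j))).reverse.prod ^ m).mulVec x
          ⬝ᵥ (P (v 0)).mulVec
            (((List.ofFn fun j : Fin n =>
                NormedSpace.exp (T j • A (v j))).reverse.prod ^ m).mulVec x)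
        ≤ Real.exp (∑ j, (-lam (v j) * T j) + ∑ j, Real.log (μ (v j) (v (j + 1)))) ^ m *
            (x ⬝ᵥ (P (v 0)).mulVec x) := by
  have hμpos p q : 0 < μ p q := one_pos.trans_le (hμ1 p q)
  set c : Fin n → ℝ := fun j => Real.exp (-lam (v j) * T j) * μ (v j) (v (j + 1))
  have hρ : Real.exp (∑ j, (-lam (v j) * T j) + ∑ j, Real.log (μ (v j) (v (j + 1))))
      = ∏ j, c j := by
    rw [← Finset.sum_add_distrib, Real.exp_sum]
    exact Finset.prod_congr rfl fun j _ => by rw [Real.exp_add, Real.exp_log (hμpos _ _)]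
  have hstep (j : Fin n) (ξ : Fin d → ℝ) :
      let η := NormedSpace.exp (T j • A (v j)) *ᵥ ξ
      η ⬝ᵥ P (v (j + 1)) *ᵥ η ≤ c j * (ξ ⬝ᵥ P (v j) *ᵥ ξ) :=
    calc _ ≤ μ (v j) (v (j + 1)) * _ := hμ _ _ _
      _ ≤ μ (v j) (v (j + 1)) * (Real.exp (-lam (v j) * T j) * (ξ ⬝ᵥ P (v j) *ᵥ ξ)) :=
          mul_le_mul_of_nonneg_left (hdecay _ _ (hT j).le ξ) (hμpos _ _).le
      _ = c j * (ξ ⬝ᵥ P (v j) *ᵥ ξ) := by ring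
  have hc j : 0 ≤ c j := mul_nonneg (Real.exp_pos _).le (hμpos _ _).le
  -- The form at step `k : ℕ` is that of `v (k mod n)`, so step `n` closes the cycle at `v 0`.
  have hcycle (x : Fin d → ℝ) := mulVec_reverse_prod_ofFn_le
    (fun k ξ => ξ ⬝ᵥ P (v k) *ᵥ ξ) (fun j => NormedSpace.exp (T j • A (v j))) c
    hc (fun j ξ => by simpa using hstep j ξ) x
  simp only [Fin.natCast_self, Nat.cast_zero] at hcycle
  refine ⟨Real.exp_lt_one_iff.mpr hcontract, fun x m => ?_⟩
  rw [hρ]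
  exact mulVec_pow_le_pow_mul (fun ξ => ξ ⬝ᵥ P (v 0) *ᵥ ξ) _
    (Finset.prod_nonneg fun j _ => hc j) hcycle x m

theorem stmt_11 {d n : ℕ} [NeZero n] {Λ : Type} [Fintype Λ] [Nonempty Λ]
    (A : Λ → Matrix (Fin d) (Fin d) ℝ)
    (P : Λ → Matrix (Fin d) (Fin d) ℝ)
    (lam : Λ → ℝ)
    (hP : ∀ p, (P p).PosDef)
    (hdecay : ∀ p, ∀ t : ℝ, 0 ≤ t → ∀ ξ : Fin d → ℝ,
      (NormedSpace.exp (t • A p)).mulVec ξ ⬝ᵥ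
          (P p).mulVec ((NormedSpace.exp (t • A p)).mulVec ξ)
        ≤ Real.exp (-lam p * t) * (ξ ⬝ᵥ (P p).mulVec ξ))
    (μ : Λ → Λ → ℝ) (hμ1 : ∀ p q, 1 ≤ μ p q)
    (hμ : ∀ p q, ∀ ξ : Fin d → ℝ, ξ ⬝ᵥ (P q).mulVec ξ ≤ μ p q * (ξ ⬝ᵥ (P p).mulVec ξ))
    (v : Fin n → Λ) (T : Fin n → ℝ) (hT : ∀ j, 0 < T j)
    (hcontract : ∑ j, (-lam (v j) * T j) + ∑ j, Real.log (μ (v j) (v (j + 1))) < 0) :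
    Real.exp (∑ j, (-lam (v j) * T j) + ∑ j, Real.log (μ (v j) (v (j + 1)))) < 1 ∧
    ∀ (x : Fin d → ℝ) (m : ℕ),
      ((List.ofFn fun j : Fin n => NormedSpace.exp (T j • A (v j))).reverse.prod ^ m).mulVec x
          ⬝ᵥ (P (v 0)).mulVec
            (((List.ofFn fun j : Fin n =>
                NormedSpace.exp (T j • A (v j))).reverse.prod ^ m).mulVec x)
        ≤ Real.exp (∑ j, (-lam (v j) * T j) + ∑ j, Real.log (μ (v j) (v (j + 1)))) ^ m *
            (x ⬝ᵥ (P (v 0)).mulVec x) :=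
  stmt_11_general A P lam hdecay μ hμ1 hμ v T hT hcontract
end

section
/- Let Λ be a nonempty finite type of modes. For each p ∈ Λ let A_p ∈ ℝ^{d×d}, let P_p ∈ ℝ^{d×d} be symmetric positive definite, and let λ_p ∈ ℝ be such that for all t ≥ 0 and all ξ ∈ ℝ^d, (exp(t·A_p)·ξ)ᵀ P_p (exp(t·A_p)·ξ) ≤ exp(−λ_p·t)·ξᵀP_pξ. For each pair p, q ∈ Λ let μ_{pq} ≥ 1 satisfy ξᵀP_qξ ≤ μ_{pq}·ξᵀP_pξ for all ξ ∈ ℝ^d. Let n ≥ 1, let v : Fin n → Λ, and let T_0, …, T_{n−1} > 0 satisfy the T-contractivity condition ∑_{j=0}^{n−1} (−λ_{v_j}·T_j) + ∑_{j=0}^{n−1} ln μ_{v_j v_{(j+1) mod n}} < 0. Define the switching times τ_0 := 0 and τ_{k+1} := τ_k + T_{k mod n} for k ∈ ℕ, and for an initial condition x_0 ∈ ℝ^d define the periodic switched trajectory x : [0, ∞) → ℝ^d by x(0) := x_0 and x(t) := exp((t − τ_k)·A_{v_{k mod n}})·x(τ_k) whenever τ_k ≤ t ≤ τ_{k+1}.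 Then x(t) → 0 as t → +∞. -/
/-!
Along the switching times the Lyapunov values `W k = x(τ k)ᵀ P_{v k} x(τ k)` satisfy
`W (k + 1) ≤ μ_{v k, v (k+1)} e^{-λ_{v k} T k} W k`. The factors are `n`-periodic and their product
over one period is `exp (∑ -λ T + ∑ log μ) < 1`, so `W` decays geometrically. Inside a switching
interval the flow inflates the Lyapunov function by a bounded factor only, and the finitely many
quadratic forms in use are uniformly coercive, so `x t → 0`.
-/

open Matrix
open Fin.NatCast

open Filter Topology Finset

theorem Matrix.PosDef.exists_pos_mul_norm_sq_le {ι : Type*} [Fintype ι] {P : Matrix ι ι ℝ}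
    (hP : P.PosDef) : ∃ m > 0, ∀ ξ : ι → ℝ, m * ‖ξ‖ ^ 2 ≤ ξ ⬝ᵥ P *ᵥ ξ := by
  have hq : Continuous fun ξ : ι → ℝ => ξ ⬝ᵥ P *ᵥ ξ :=
    continuous_id.dotProduct (continuous_const.matrix_mulVec continuous_id)
  obtain ⟨m, hm, hmin⟩ := (isCompact_sphere (0 : ι → ℝ) 1).exists_forall_le' hq.continuousOn
    fun ξ hξ => by
      have : ξ ≠ 0 := norm_ne_zero_iff.1 (by simp_all)
      simpa using hP.dotProduct_mulVec_pos this
  refine ⟨m, hm, fun ξ => ?_⟩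
  rcases eq_or_ne ξ 0 with rfl | hξ
  · simp
  have hξ' : 0 < ‖ξ‖ := norm_pos_iff.2 hξ
  have h := hmin (‖ξ‖⁻¹ • ξ) (by simp [norm_smul, hξ'.ne'])
  simp only [mulVec_smul, dotProduct_smul, smul_dotProduct, smul_eq_mul] at h
  calc m * ‖ξ‖ ^ 2 ≤ ‖ξ‖⁻¹ * (‖ξ‖⁻¹ * (ξ ⬝ᵥ P *ᵥ ξ)) * ‖ξ‖ ^ 2 := by gcongr
    _ = ξ ⬝ᵥ P *ᵥ ξ := by field_simp

theorem le_prod_range_mul_of_forall_le_mul {W r : ℕ → ℝ} (hr : ∀ k, 0 ≤ r k)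
    (hstep : ∀ k, W (k + 1) ≤ r k * W k) (k j : ℕ) :
    W (k + j) ≤ (∏ i ∈ range j, r (k + i)) * W k := by
  induction j with
  | zero => simp
  | succ j ih =>
    calc W (k + (j + 1)) ≤ r (k + j) * W (k + j) := hstep (k + j)
      _ ≤ r (k + j) * ((∏ i ∈ range j, r (k + i)) * W k) := by gcongr; exact hr _
      _ = (∏ i ∈ range (j + 1), r (k + i)) * W k := by rw [prod_range_succ]; ring

theorem tendsto_zero_of_le_mul_of_periodic {W r : ℕ → ℝ} {n : ℕ} (hn : n ≠ 0)
    (hW : ∀ k, 0 ≤ W k) (hr : ∀ k, 0 ≤ r k) (hper : Function.Periodic r n)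
    (hstep : ∀ k, W (k + 1) ≤ r k * W k) (hc : ∏ i ∈ range n, r i < 1) :
    Tendsto W atTop (𝓝 0) := by
  set c := ∏ i ∈ range n, r i
  have hc0 : 0 ≤ c := prod_nonneg fun i _ => hr i
  have hwindow := le_prod_range_mul_of_forall_le_mul hr hstep
  have hshift (m i : ℕ) : r (m * n + i) = r i := by rw [add_comm]; exact hper.nat_mul m i
  have hperiod (m : ℕ) : W (m * n) ≤ c ^ m * W 0 := by
    induction m with
    | zero => simp
    | succ m ih =>
      calc W ((m + 1) * n) ≤ (∏ i ∈ range n, r (m * n + i)) * W (m * n) := by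
            rw [add_one_mul]; exact hwindow _ _
        _ ≤ c * (c ^ m * W 0) := by simp only [hshift, c]; gcongr
        _ = c ^ (m + 1) * W 0 := by ring
  set R := ∑ j ∈ range n, ∏ i ∈ range j, r i
  have hbound (k : ℕ) : W k ≤ R * W 0 * c ^ (k / n) := by
    have hpartial : ∏ i ∈ range (k % n), r i ≤ R :=
      single_le_sum (fun j _ => prod_nonneg fun i _ => hr i)
        (mem_range.2 (Nat.mod_lt k (Nat.pos_of_ne_zero hn)))
    calc W k = W (k / n * n + k % n) := by rw [Nat.div_add_mod']
      _ ≤ (∏ i ∈ range (k % n), r i) * W (k / n * n) := by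
          simpa only [hshift] using hwindow (k / n * n) (k % n)
      _ ≤ R * (c ^ (k / n) * W 0) := by
          have hpartial0 : 0 ≤ ∏ i ∈ range (k % n), r i := prod_nonneg fun i _ => hr i
          exact mul_le_mul hpartial (hperiod _) (hW _) (hpartial0.trans hpartial)
      _ = R * W 0 * c ^ (k / n) := by ring
  have hpow : Tendsto (fun k => c ^ (k / n)) atTop (𝓝 0) :=
    (tendsto_pow_atTop_nhds_zero_of_lt_one hc0 hc).comp (Nat.tendsto_div_const_atTop hn)
  exact squeeze_zero hW hbound (by simpa using hpow.const_mul (R * W 0))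

theorem exists_le_le_succ_of_tendsto_atTop {α : Type*} [LinearOrder α] [NoMaxOrder α]
    {τ : ℕ → α} (hτ : Tendsto τ atTop atTop) {N : ℕ} {t : α} (ht : τ N ≤ t) :
    ∃ k ≥ N, τ k ≤ t ∧ t ≤ τ (k + 1) := by
  classical
  have hex : ∃ j, t < τ (N + j + 1) := by
    obtain ⟨j, hj⟩ := ((tendsto_add_atTop_iff_nat (N + 1)).2 hτ |>.eventually_gt_atTop t).exists
    exact ⟨j, by convert hj using 2; omega⟩
  set j := Nat.find hex
  refine ⟨N + j, Nat.le_add_right N j, ?_, (Nat.find_spec hex).le⟩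
  rcases Nat.eq_zero_or_pos j with hj | hj
  · rwa [hj, add_zero]
  · have hmin := Nat.find_min hex (Nat.sub_lt hj one_pos)
    rwa [not_lt, add_assoc, Nat.sub_add_cancel (show 1 ≤ j from hj)] at hmin

theorem tendsto_zero_of_norm_le_of_mem_Icc {E : Type*} [SeminormedAddCommGroup E] {τ : ℕ → ℝ}
    (hτ : Tendsto τ atTop atTop) {f : ℝ → E} {a : ℕ → ℝ} (ha : Tendsto a atTop (𝓝 0))
    (hf : ∀ k t, τ k ≤ t → t ≤ τ (k + 1) → ‖f t‖ ≤ a k) : Tendsto f atTop (𝓝 0) := by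
  rw [Metric.tendsto_atTop]
  intro ε hε
  obtain ⟨N, hN⟩ := eventually_atTop.1 (ha.eventually (gt_mem_nhds hε))
  refine ⟨τ N, fun t ht => ?_⟩
  obtain ⟨k, hk, h1, h2⟩ := exists_le_le_succ_of_tendsto_atTop hτ ht
  rw [dist_zero_right]
  exact (hf k t h1 h2).trans_lt (hN k hk)

theorem tendsto_atTop_of_add_le_succ {τ : ℕ → ℝ} {δ : ℝ} (hδ : 0 < δ)
    (h : ∀ k, τ k + δ ≤ τ (k + 1)) : Tendsto τ atTop atTop := by
  have hlin (k : ℕ) : τ 0 + k * δ ≤ τ k := by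
    induction k with
    | zero => simp
    | succ k ih => push_cast; linarith [h k]
  exact tendsto_atTop_mono hlin <| tendsto_atTop_add_const_left _ _ <|
    tendsto_natCast_atTop_atTop.atTop_mul_const hδ

theorem prod_mul_exp_lt_one {ι : Type*} (s : Finset ι) {a b : ι → ℝ} (ha : ∀ i, 0 < a i)
    (h : ∑ i ∈ s, b i + ∑ i ∈ s, Real.log (a i) < 0) : ∏ i ∈ s, a i * Real.exp (b i) < 1 := by
  have : ∏ i ∈ s, a i * Real.exp (b i) = Real.exp (∑ i ∈ s, b i + ∑ i ∈ s, Real.log (a i)) := by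
    rw [← sum_add_distrib, Real.exp_sum]
    exact prod_congr rfl fun i _ => by rw [Real.exp_add, Real.exp_log (ha i), mul_comm]
  rw [this]
  exact Real.exp_lt_one_iff.2 h

theorem Real.exp_neg_mul_le_exp_abs_mul {lam s S : ℝ} (hs : 0 ≤ s) (hsS : s ≤ S) :
    Real.exp (-lam * s) ≤ Real.exp (|lam| * S) := Real.exp_le_exp.2 <|
  calc -lam * s ≤ |lam| * s := mul_le_mul_of_nonneg_right (neg_le_abs lam) hs
    _ ≤ |lam| * S := mul_le_mul_of_nonneg_left hsS (abs_nonneg lam)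

theorem tendsto_quadForm_switchingTimes_zero {d n : ℕ} [NeZero n] {Λ : Type}
    {A P : Λ → Matrix (Fin d) (Fin d) ℝ} {lam : Λ → ℝ} {μ : Λ → Λ → ℝ} {v : Fin n → Λ}
    {T : Fin n → ℝ} {τ : ℕ → ℝ} {x : ℝ → Fin d → ℝ} (hP : ∀ p, (P p).PosSemidef)
    (hdecay : ∀ p, ∀ t : ℝ, 0 ≤ t → ∀ ξ : Fin d → ℝ,
      (NormedSpace.exp (t • A p)) *ᵥ ξ ⬝ᵥ P p *ᵥ ((NormedSpace.exp (t • A p)) *ᵥ ξ)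
        ≤ Real.exp (-lam p * t) * (ξ ⬝ᵥ P p *ᵥ ξ))
    (hμ0 : ∀ p q, 0 < μ p q) (hμ : ∀ p q ξ, ξ ⬝ᵥ P q *ᵥ ξ ≤ μ p q * (ξ ⬝ᵥ P p *ᵥ ξ))
    (hT : ∀ j, 0 ≤ T j)
    (hcontract : ∑ j, (-lam (v j) * T j) + ∑ j, Real.log (μ (v j) (v (j + 1))) < 0)
    (hτ : ∀ k : ℕ, τ (k + 1) = τ k + T k)
    (hx : ∀ k : ℕ, ∀ t, τ k ≤ t → t ≤ τ (k + 1) →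
      x t = (NormedSpace.exp ((t - τ k) • A (v k))) *ᵥ x (τ k)) :
    Tendsto (fun k : ℕ => x (τ k) ⬝ᵥ P (v k) *ᵥ x (τ k)) atTop (𝓝 0) := by
  set W : ℕ → ℝ := fun k => x (τ k) ⬝ᵥ P (v k) *ᵥ x (τ k)
  set ρ : Fin n → ℝ := fun j => μ (v j) (v (j + 1)) * Real.exp (-lam (v j) * T j)
  have hstep (k : ℕ) : W (k + 1) ≤ ρ k * W k := by
    have hflow : x (τ (k + 1)) = NormedSpace.exp (T k • A (v k)) *ᵥ x (τ k) := by
      rw [hx k _ (by rw [hτ k]; linarith [hT k]) le_rfl, hτ k, add_sub_cancel_left]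
    calc W (k + 1) ≤ μ (v k) (v (k + 1)) * (x (τ (k + 1)) ⬝ᵥ P (v k) *ᵥ x (τ (k + 1))) := by
          simpa only [W, Nat.cast_succ] using hμ (v k) (v (k + 1)) (x (τ (k + 1)))
      _ ≤ μ (v k) (v (k + 1)) * (Real.exp (-lam (v k) * T k) * W k) := by
          rw [hflow]; exact mul_le_mul_of_nonneg_left (hdecay _ _ (hT k) _) (hμ0 _ _).le
      _ = ρ k * W k := (mul_assoc ..).symm
  refine tendsto_zero_of_le_mul_of_periodic (NeZero.ne n)
    (fun k => by simpa using (hP _).dotProduct_mulVec_nonneg (x (τ k)))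
    (fun k => (mul_pos (hμ0 _ _) (Real.exp_pos _)).le) (fun k => by simp) hstep ?_
  rw [← Fin.prod_univ_eq_prod_range (fun k => ρ k)]
  simpa only [Fin.cast_val_eq_self] using prod_mul_exp_lt_one univ (fun j => hμ0 _ _) hcontract

theorem stmt_12_general {d n : ℕ} [NeZero n] {Λ : Type}
    (A : Λ → Matrix (Fin d) (Fin d) ℝ)
    (P : Λ → Matrix (Fin d) (Fin d) ℝ)
    (lam : Λ → ℝ)
    (hP : ∀ p, (P p).PosDef)
    (hdecay : ∀ p, ∀ t : ℝ, 0 ≤ t → ∀ ξ : Fin d → ℝ,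
      (NormedSpace.exp (t • A p)).mulVec ξ ⬝ᵥ
          (P p).mulVec ((NormedSpace.exp (t • A p)).mulVec ξ)
        ≤ Real.exp (-lam p * t) * (ξ ⬝ᵥ (P p).mulVec ξ))
    (μ : Λ → Λ → ℝ) (hμ1 : ∀ p q, 1 ≤ μ p q)
    (hμ : ∀ p q, ∀ ξ : Fin d → ℝ, ξ ⬝ᵥ (P q).mulVec ξ ≤ μ p q * (ξ ⬝ᵥ (P p).mulVec ξ))
    (v : Fin n → Λ) (T : Fin n → ℝ) (hT : ∀ j, 0 < T j)
    (hcontract : ∑ j, (-lam (v j) * T j) + ∑ j, Real.log (μ (v j) (v (j + 1))) < 0)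
    (τ : ℕ → ℝ) (hτ : ∀ k : ℕ, τ (k + 1) = τ k + T (k : Fin n))
    (x : ℝ → Fin d → ℝ)
    (hx : ∀ k : ℕ, ∀ t : ℝ, τ k ≤ t → t ≤ τ (k + 1) →
      x t = (NormedSpace.exp ((t - τ k) • A (v (k : Fin n)))).mulVec (x (τ k))) :
    Filter.Tendsto x Filter.atTop (nhds 0) := by
  set W : ℕ → ℝ := fun k => x (τ k) ⬝ᵥ P (v k) *ᵥ x (τ k)
  have hW0 (k : ℕ) : 0 ≤ W k := by
    simpa using (hP _).posSemidef.dotProduct_mulVec_nonneg (x (τ k))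
  have hW : Tendsto W atTop (𝓝 0) :=
    tendsto_quadForm_switchingTimes_zero (fun p => (hP p).posSemidef) hdecay
      (fun p q => one_pos.trans_le (hμ1 p q)) hμ (fun j => (hT j).le) hcontract hτ hx
  obtain ⟨j₀, hj₀⟩ := Finite.exists_min T
  have hτ_top : Tendsto τ atTop atTop :=
    tendsto_atTop_of_add_le_succ (hT j₀) fun k => by rw [hτ k]; linarith [hj₀ k]
  choose m hm hcoer using fun p => (hP p).exists_pos_mul_norm_sq_le
  obtain ⟨j₁, hj₁⟩ := Finite.exists_min fun j => m (v j)
  obtain ⟨B, hB⟩ := Finite.exists_le fun j => Real.exp (|lam (v j)| * T j)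
  refine tendsto_zero_of_norm_le_of_mem_Icc hτ_top (a := fun k => √(B * W k / m (v j₁)))
    (by simpa using ((hW.const_mul B).div_const _).sqrt) fun k t h1 h2 => ?_
  refine (le_abs_self _).trans (Real.abs_le_sqrt ?_)
  rw [le_div_iff₀ (hm _)]
  calc ‖x t‖ ^ 2 * m (v j₁) ≤ m (v k) * ‖x t‖ ^ 2 := by rw [mul_comm]; gcongr; exact hj₁ _
    _ ≤ x t ⬝ᵥ P (v k) *ᵥ x t := hcoer _ _
    _ ≤ Real.exp (-lam (v k) * (t - τ k)) * W k := by
        rw [hx k t h1 h2]; exact hdecay _ _ (sub_nonneg.2 h1) _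
    _ ≤ B * W k := by
        gcongr
        · exact hW0 k
        · exact (Real.exp_neg_mul_le_exp_abs_mul (sub_nonneg.2 h1)
            (by linarith [hτ k])).trans (hB k)

theorem stmt_12 {d n : ℕ} [NeZero n] {Λ : Type} [Fintype Λ] [Nonempty Λ]
    (A : Λ → Matrix (Fin d) (Fin d) ℝ)
    (P : Λ → Matrix (Fin d) (Fin d) ℝ)
    (lam : Λ → ℝ)
    (hP : ∀ p, (P p).PosDef)
    (hdecay : ∀ p, ∀ t : ℝ, 0 ≤ t → ∀ ξ : Fin d → ℝ,
      (NormedSpace.exp (t • A p)).mulVec ξ ⬝ᵥ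
          (P p).mulVec ((NormedSpace.exp (t • A p)).mulVec ξ)
        ≤ Real.exp (-lam p * t) * (ξ ⬝ᵥ (P p).mulVec ξ))
    (μ : Λ → Λ → ℝ) (hμ1 : ∀ p q, 1 ≤ μ p q)
    (hμ : ∀ p q, ∀ ξ : Fin d → ℝ, ξ ⬝ᵥ (P q).mulVec ξ ≤ μ p q * (ξ ⬝ᵥ (P p).mulVec ξ))
    (v : Fin n → Λ) (T : Fin n → ℝ) (hT : ∀ j, 0 < T j)
    (hcontract : ∑ j, (-lam (v j) * T j) + ∑ j, Real.log (μ (v j) (v (j + 1))) < 0)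
    (τ : ℕ → ℝ) (hτ0 : τ 0 = 0) (hτ : ∀ k : ℕ, τ (k + 1) = τ k + T (k : Fin n))
    (x0 : Fin d → ℝ) (x : ℝ → Fin d → ℝ) (hx0 : x 0 = x0)
    (hx : ∀ k : ℕ, ∀ t : ℝ, τ k ≤ t → t ≤ τ (k + 1) →
      x t = (NormedSpace.exp ((t - τ k) • A (v (k : Fin n)))).mulVec (x (τ k))) :
    Filter.Tendsto x Filter.atTop (nhds 0) :=
  stmt_12_general A P lam hP hdecay μ hμ1 hμ v T hT hcontract τ hτ x hx
end

section
/- Let Λ be a nonempty finite type of modes. For each p ∈ Λ let A_p ∈ ℝ^{d×d}, let P_p ∈ ℝ^{d×d} be symmetric positive definite, and let λ_p ∈ ℝ be such that for all t ≥ 0 and all ξ ∈ ℝ^d, (exp(t·A_p)·ξ)ᵀ P_p (exp(t·A_p)·ξ) ≤ exp(−λ_p·t)·ξᵀP_pξ. For each pair p, q ∈ Λ let μ_{pq} ≥ 1 satisfy ξᵀP_qξ ≤ μ_{pq}·ξᵀP_pξ for all ξ ∈ ℝ^d. Let n ≥ 1, v : Fin n → Λ, and T_0, …, T_{n−1} >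 0. Define τ_0 := 0, τ_{j+1} := τ_j + T_j for 0 ≤ j ≤ n−1, and for x_0 ∈ ℝ^d define x(t) := exp((t − τ_j)·A_{v_j})·x(τ_j) for τ_j ≤ t ≤ τ_{j+1} with x(0) = x_0. Then for every j ∈ {0, …, n−1} and every t ∈ [τ_j, τ_{j+1}], x(t)ᵀ P_{v_j} x(t) ≤ exp(∑_{l=0}^{n−1} |λ_{v_l}|·T_l + ∑_{l=0}^{n−1} ln μ_{v_l v_{(l+1) mod n}}) · x_0ᵀ P_{v_0} x_0; that is, within one period of the cycle the Lyapunov-like value of the trajectory exceeds its initial value by at most a fixed factor depending only on the λ's, μ's and dwell times. -/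
/-!
Between two switching times the mode `p` is fixed, and the decay hypothesis bounds the growth of
the Lyapunov function `V_p(ξ) = ξᵀ P_p ξ` along the flow by `exp (|λ_p| T)`, whatever the sign
of `λ_p`. At a switching time `V` changes from `V_p` to `V_q` at the cost of the factor `μ_{pq}`.
Telescoping these factors along the cycle, each dwell time `T_l` and each switch
`v_l → v_{l+1}` contributes its term to the exponent; all terms are nonnegative, so the partial
products up to any time in the period are bounded by the full product.
-/

open Matrix Finset Fin.NatCast

lemma Matrix.PosSemidef.dotProduct_mulVec_self_nonneg {d : ℕ} {P : Matrix (Fin d) (Fin d) ℝ}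
    (hP : P.PosSemidef) (ξ : Fin d → ℝ) : 0 ≤ ξ ⬝ᵥ P *ᵥ ξ := by
  simpa using hP.dotProduct_mulVec_nonneg ξ

lemma dotProduct_mulVec_exp_smul_le {d : ℕ} {A P : Matrix (Fin d) (Fin d) ℝ} {lam : ℝ}
    (hP : P.PosSemidef)
    (hdecay : ∀ t : ℝ, 0 ≤ t → ∀ ξ : Fin d → ℝ,
      NormedSpace.exp (t • A) *ᵥ ξ ⬝ᵥ P *ᵥ (NormedSpace.exp (t • A) *ᵥ ξ)
        ≤ Real.exp (-lam * t) * (ξ ⬝ᵥ P *ᵥ ξ))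
    {s T : ℝ} (hs : 0 ≤ s) (hsT : s ≤ T) (ξ : Fin d → ℝ) :
    NormedSpace.exp (s • A) *ᵥ ξ ⬝ᵥ P *ᵥ (NormedSpace.exp (s • A) *ᵥ ξ)
      ≤ Real.exp (|lam| * T) * (ξ ⬝ᵥ P *ᵥ ξ) := by
  have hexponent : -lam * s ≤ |lam| * T := calc
    -lam * s ≤ |lam| * s := mul_le_mul_of_nonneg_right (neg_le_abs lam) hs
    _ ≤ |lam| * T := mul_le_mul_of_nonneg_left hsT (abs_nonneg lam)
  calc _ ≤ Real.exp (-lam * s) * (ξ ⬝ᵥ P *ᵥ ξ) := hdecay s hs ξ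
    _ ≤ _ := by gcongr; exact hP.dotProduct_mulVec_self_nonneg ξ

lemma le_exp_sum_range_mul_of_le_exp_mul {a c : ℕ → ℝ} {m : ℕ}
    (hstep : ∀ k < m, a (k + 1) ≤ Real.exp (c k) * a k) :
    ∀ k ≤ m, a k ≤ Real.exp (∑ l ∈ range k, c l) * a 0 := by
  intro k hk
  induction k with
  | zero => simp
  | succ k ih =>
    calc a (k + 1) ≤ Real.exp (c k) * a k := hstep k hk
      _ ≤ Real.exp (c k) * (Real.exp (∑ l ∈ range k, c l) * a 0) := by
        gcongr; exact ih (by omega)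
      _ = _ := by rw [sum_range_succ, Real.exp_add]; ring

lemma sum_range_add_le_sum_range {c : ℕ → ℝ} (hc : ∀ k, 0 ≤ c k) {j n : ℕ} (hjn : j < n)
    {b : ℝ} (hb : b ≤ c j) : ∑ l ∈ range j, c l + b ≤ ∑ l ∈ range n, c l := calc
  ∑ l ∈ range j, c l + b ≤ ∑ l ∈ range (j + 1), c l := by rw [sum_range_succ]; gcongr
  _ ≤ ∑ l ∈ range n, c l :=
    sum_le_sum_of_subset_of_nonneg (range_subset_range.2 hjn) fun l _ _ => hc l

lemma le_exp_sum_range_mul_of_le_exp_mul_of_lt {a c : ℕ → ℝ} {m j : ℕ} {b e : ℝ}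
    (hc : ∀ k, 0 ≤ c k) (ha : 0 ≤ a 0) (hstep : ∀ k < m, a (k + 1) ≤ Real.exp (c k) * a k)
    (hjm : j < m) (he : e ≤ c j) (hb : b ≤ Real.exp e * a j) :
    b ≤ Real.exp (∑ l ∈ range m, c l) * a 0 := calc
  b ≤ Real.exp e * (Real.exp (∑ l ∈ range j, c l) * a 0) := by
    grw [hb, le_exp_sum_range_mul_of_le_exp_mul hstep j hjm.le]
  _ = Real.exp (∑ l ∈ range j, c l + e) * a 0 := by rw [Real.exp_add]; ring
  _ ≤ Real.exp (∑ l ∈ range m, c l) * a 0 := by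
    gcongr; exact sum_range_add_le_sum_range hc hjm he

theorem stmt_13_general {d n : ℕ} [NeZero n] {Λ : Type}
    (A : Λ → Matrix (Fin d) (Fin d) ℝ)
    (P : Λ → Matrix (Fin d) (Fin d) ℝ)
    (lam : Λ → ℝ)
    (hP : ∀ p, (P p).PosDef)
    (hdecay : ∀ p, ∀ t : ℝ, 0 ≤ t → ∀ ξ : Fin d → ℝ,
      (NormedSpace.exp (t • A p)).mulVec ξ ⬝ᵥ
          (P p).mulVec ((NormedSpace.exp (t • A p)).mulVec ξ)
        ≤ Real.exp (-lam p * t) * (ξ ⬝ᵥ (P p).mulVec ξ))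
    (μ : Λ → Λ → ℝ) (hμ1 : ∀ p q, 1 ≤ μ p q)
    (hμ : ∀ p q, ∀ ξ : Fin d → ℝ, ξ ⬝ᵥ (P q).mulVec ξ ≤ μ p q * (ξ ⬝ᵥ (P p).mulVec ξ))
    (v : Fin n → Λ) (T : Fin n → ℝ) (hT : ∀ j, 0 < T j)
    (τ : ℕ → ℝ) (hτ0 : τ 0 = 0) (hτ : ∀ j : Fin n, τ (j + 1) = τ j + T j)
    (x0 : Fin d → ℝ) (x : ℝ → Fin d → ℝ) (hx0 : x 0 = x0)
    (hx : ∀ j : Fin n, ∀ t : ℝ, τ j ≤ t → t ≤ τ (j + 1) →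
      x t = (NormedSpace.exp ((t - τ j) • A (v j))).mulVec (x (τ j))) :
    ∀ j : Fin n, ∀ t : ℝ, τ j ≤ t → t ≤ τ (j + 1) →
      x t ⬝ᵥ (P (v j)).mulVec (x t) ≤
        Real.exp (∑ l, |lam (v l)| * T l + ∑ l, Real.log (μ (v l) (v (l + 1)))) *
          (x0 ⬝ᵥ (P (v 0)).mulVec x0) := by
  have hsegment : ∀ j : Fin n, ∀ t, τ j ≤ t → t ≤ τ (j + 1) →
      x t ⬝ᵥ P (v j) *ᵥ x t ≤
        Real.exp (|lam (v j)| * T j) * (x (τ j) ⬝ᵥ P (v j) *ᵥ x (τ j)) := by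
    intro j t hjt htj
    rw [hx j t hjt htj]
    exact dotProduct_mulVec_exp_smul_le (hP _).posSemidef (hdecay _) (by linarith)
      (by linarith [hτ j]) _
  set a : ℕ → ℝ := fun k => x (τ k) ⬝ᵥ P (v k) *ᵥ x (τ k)
  set c : ℕ → ℝ := fun k => |lam (v k)| * T k + Real.log (μ (v k) (v ((k : Fin n) + 1)))
  have hc : ∀ k : ℕ, |lam (v k)| * T k ≤ c k := fun k =>
    le_add_of_nonneg_right (Real.log_nonneg (hμ1 _ _))
  have hstep : ∀ k < n, a (k + 1) ≤ Real.exp (c k) * a k := by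
    intro k hk
    obtain ⟨j, rfl⟩ : ∃ j : Fin n, (j : ℕ) = k := ⟨⟨k, hk⟩, rfl⟩
    simp only [Nat.cast_succ, Fin.cast_val_eq_self, a, c]
    calc _ ≤ μ (v j) (v (j + 1)) * (x (τ (j + 1)) ⬝ᵥ P (v j) *ᵥ x (τ (j + 1))) :=
          hμ _ _ _
      _ ≤ μ (v j) (v (j + 1)) *
          (Real.exp (|lam (v j)| * T j) * (x (τ j) ⬝ᵥ P (v j) *ᵥ x (τ j))) :=
        mul_le_mul_of_nonneg_left (hsegment j _ (by linarith [hτ j, hT j]) le_rfl)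
          (zero_le_one.trans (hμ1 _ _))
      _ = _ := by rw [Real.exp_add, Real.exp_log (zero_lt_one.trans_le (hμ1 _ _))]; ring
  have ha0 : a 0 = x0 ⬝ᵥ P (v 0) *ᵥ x0 := by simp only [a, Nat.cast_zero, hτ0, hx0]
  have hsum : ∑ l ∈ range n, c l =
      ∑ l, |lam (v l)| * T l + ∑ l, Real.log (μ (v l) (v (l + 1))) := by
    rw [← Fin.sum_univ_eq_sum_range, ← sum_add_distrib]
    simp only [Fin.cast_val_eq_self, c]
  intro j t hjt htj
  have hcj : |lam (v j)| * T j ≤ c j := by simpa only [Fin.cast_val_eq_self] using hc j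
  have hj : x t ⬝ᵥ P (v j) *ᵥ x t ≤ Real.exp (|lam (v j)| * T j) * a j := by
    simpa only [Fin.cast_val_eq_self, a] using hsegment j t hjt htj
  rw [← hsum, ← ha0]
  exact le_exp_sum_range_mul_of_le_exp_mul_of_lt
    (fun k => (mul_nonneg (abs_nonneg _) (hT _).le).trans (hc k))
    (ha0 ▸ (hP _).posSemidef.dotProduct_mulVec_self_nonneg x0) hstep j.isLt hcj hj

theorem stmt_13 {d n : ℕ} [NeZero n] {Λ : Type} [Fintype Λ] [Nonempty Λ]
    (A : Λ → Matrix (Fin d) (Fin d) ℝ)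
    (P : Λ → Matrix (Fin d) (Fin d) ℝ)
    (lam : Λ → ℝ)
    (hP : ∀ p, (P p).PosDef)
    (hdecay : ∀ p, ∀ t : ℝ, 0 ≤ t → ∀ ξ : Fin d → ℝ,
      (NormedSpace.exp (t • A p)).mulVec ξ ⬝ᵥ
          (P p).mulVec ((NormedSpace.exp (t • A p)).mulVec ξ)
        ≤ Real.exp (-lam p * t) * (ξ ⬝ᵥ (P p).mulVec ξ))
    (μ : Λ → Λ → ℝ) (hμ1 : ∀ p q, 1 ≤ μ p q)
    (hμ : ∀ p q, ∀ ξ : Fin d → ℝ, ξ ⬝ᵥ (P q).mulVec ξ ≤ μ p q * (ξ ⬝ᵥ (P p).mulVec ξ))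
    (v : Fin n → Λ) (T : Fin n → ℝ) (hT : ∀ j, 0 < T j)
    (τ : ℕ → ℝ) (hτ0 : τ 0 = 0) (hτ : ∀ j : Fin n, τ (j + 1) = τ j + T j)
    (x0 : Fin d → ℝ) (x : ℝ → Fin d → ℝ) (hx0 : x 0 = x0)
    (hx : ∀ j : Fin n, ∀ t : ℝ, τ j ≤ t → t ≤ τ (j + 1) →
      x t = (NormedSpace.exp ((t - τ j) • A (v j))).mulVec (x (τ j))) :
    ∀ j : Fin n, ∀ t : ℝ, τ j ≤ t → t ≤ τ (j + 1) →
      x t ⬝ᵥ (P (v j)).mulVec (x t) ≤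
        Real.exp (∑ l, |lam (v l)| * T l + ∑ l, Real.log (μ (v l) (v (l + 1)))) *
          (x0 ⬝ᵥ (P (v 0)).mulVec x0) :=
  stmt_13_general A P lam hP hdecay μ hμ1 hμ v T hT τ hτ0 hτ x0 x hx0 hx
end

section
/- Let Λ be a nonempty finite type of modes. For each p ∈ Λ let A_p ∈ ℝ^{d×d}, let P_p ∈ ℝ^{d×d} be symmetric positive definite, and let λ_p ∈ ℝ be such that for all t ≥ 0 and all ξ ∈ ℝ^d, (exp(t·A_p)·ξ)ᵀ P_p (exp(t·A_p)·ξ) ≤ exp(−λ_p·t)·ξᵀP_pξ. For each pair p, q ∈ Λ let μ_{pq} ≥ 1 satisfy ξᵀP_qξ ≤ μ_{pq}·ξᵀP_pξ for all ξ ∈ ℝ^d. Let n ≥ 1, v : Fin n → Λ, and T_0, …, T_{n−1} > 0 satisfy ∑_{j=0}^{n−1} (−λ_{v_j}·T_j) + ∑_{j=0}^{n−1} ln μ_{v_j v_{(j+1) mod n}} < 0, and set ρ := exp of that sum, T_W := ∑_{j=0}^{n−1} T_j, K := exp(∑_{j=0}^{n−1} |λ_{v_j}|·T_j + ∑_{j=0}^{n−1}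 ln μ_{v_j v_{(j+1) mod n}}), and c := sqrt((max_{p∈Λ} λ_max(P_p)) / (min_{p∈Λ} λ_min(P_p))). Define τ_0 := 0, τ_{k+1} := τ_k + T_{k mod n}, and for x_0 ∈ ℝ^d the periodic switched trajectory x(t) := exp((t − τ_k)·A_{v_{k mod n}})·x(τ_k) for τ_k ≤ t ≤ τ_{k+1}, x(0) = x_0. Then for every m ∈ ℕ and every t with m·T_W ≤ t < (m+1)·T_W, ‖x(t)‖ ≤ c · sqrt(K · ρ^m) · ‖x_0‖, where ‖·‖ is the Euclidean norm. -/
/-!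
At the switching times the Lyapunov value `x(τ_k)ᵀ P_{v_k} x(τ_k)` is multiplied by at most
`e^{-λ T}` along a dwell interval and by at most `μ` at a switch, hence by at most `ρ` over a full
period. Inside the current period, the partial product of these factors together with the partial
dwell is bounded by `K`, because every factor `μ e^{|λ| T}` is at least `1`. Comparing `ξᵀ P ξ`
with `‖ξ‖²` through the extreme eigenvalues of the `P_p` turns this into the bound on `‖x t‖`.
-/

open Matrix Fin.NatCast

namespace Matrix.IsHermitian

variable {ι : Type*} [Fintype ι] [DecidableEq ι] {A : Matrix ι ι ℝ}

theorem exists_sum_sq_eq_and_dotProduct_mulVec_eq (hA : A.IsHermitian) (ξ : ι → ℝ) :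
    ∃ y : ι → ℝ, ∑ i, y i ^ 2 = ∑ i, ξ i ^ 2 ∧
      ξ ⬝ᵥ A *ᵥ ξ = ∑ i, hA.eigenvalues i * y i ^ 2 := by
  set U : Matrix ι ι ℝ := (hA.eigenvectorUnitary : Matrix ι ι ℝ)
  set D : Matrix ι ι ℝ := diagonal (RCLike.ofReal ∘ hA.eigenvalues)
  set y := star U *ᵥ ξ with hy
  have hξU : ξ ᵥ* U = y := by
    rw [hy, star_eq_conjTranspose, conjTranspose_eq_transpose_of_trivial, mulVec_transpose]
  have hU : U * star U = 1 := Matrix.mem_unitaryGroup_iff.mp hA.eigenvectorUnitary.2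
  refine ⟨y, ?_, ?_⟩
  · have : y ⬝ᵥ y = ξ ⬝ᵥ ξ := by
      rw [← hξU, ← dotProduct_mulVec, hξU, mulVec_mulVec, hU, one_mulVec]
    simpa [dotProduct, sq] using this
  · calc ξ ⬝ᵥ A *ᵥ ξ = ξ ⬝ᵥ (U * D * star U) *ᵥ ξ := by
          congr 2
          exact hA.spectral_theorem
      _ = (ξ ᵥ* U) ⬝ᵥ D *ᵥ y := by
          rw [← mulVec_mulVec, ← mulVec_mulVec, dotProduct_mulVec]
      _ = ∑ i, hA.eigenvalues i * y i ^ 2 := by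
          simp only [hξU, D, dotProduct, mulVec_diagonal, Function.comp_apply,
            RCLike.ofReal_real_eq_id, id_eq]
          exact Finset.sum_congr rfl fun i _ => by ring

theorem mul_sum_sq_le_dotProduct_mulVec (hA : A.IsHermitian) {c : ℝ}
    (hc : ∀ i, c ≤ hA.eigenvalues i) (ξ : ι → ℝ) : c * ∑ i, ξ i ^ 2 ≤ ξ ⬝ᵥ A *ᵥ ξ := by
  obtain ⟨y, hy, hAy⟩ := hA.exists_sum_sq_eq_and_dotProduct_mulVec_eq ξ
  rw [hAy, ← hy, Finset.mul_sum]
  gcongr with i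
  exact hc i

theorem dotProduct_mulVec_le_mul_sum_sq (hA : A.IsHermitian) {C : ℝ}
    (hC : ∀ i, hA.eigenvalues i ≤ C) (ξ : ι → ℝ) : ξ ⬝ᵥ A *ᵥ ξ ≤ C * ∑ i, ξ i ^ 2 := by
  obtain ⟨y, hy, hAy⟩ := hA.exists_sum_sq_eq_and_dotProduct_mulVec_eq ξ
  rw [hAy, ← hy, Finset.mul_sum]
  gcongr with i
  exact hC i

end Matrix.IsHermitian

theorem sqrt_sum_sq_le_of_dotProduct_mulVec_le {ι Λ : Type*} [Fintype ι] [DecidableEq ι]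
    [Finite Λ] {P : Λ → Matrix ι ι ℝ} (hP : ∀ p, (P p).PosDef) {p q : Λ} {y z : ι → ℝ} {C : ℝ}
    (hC : 0 ≤ C) (h : y ⬝ᵥ P p *ᵥ y ≤ C * (z ⬝ᵥ P q *ᵥ z)) :
    Real.sqrt (∑ i, y i ^ 2) ≤
      Real.sqrt ((⨆ p, ⨆ i, (hP p).1.eigenvalues i) / (⨅ p, ⨅ i, (hP p).1.eigenvalues i)) *
        Real.sqrt C * Real.sqrt (∑ i, z i ^ 2) := by
  rcases isEmpty_or_nonempty ι with hι | hι
  · simp only [Finset.univ_eq_empty, Finset.sum_empty, Real.sqrt_zero]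
    positivity
  have : Nonempty Λ := ⟨p⟩
  set e := ⨅ p, ⨅ i, (hP p).1.eigenvalues i
  set E := ⨆ p, ⨆ i, (hP p).1.eigenvalues i
  have he : ∀ p i, e ≤ (hP p).1.eigenvalues i := fun p i =>
    (ciInf_le (Finite.bddBelow_range _) p).trans (ciInf_le (Finite.bddBelow_range _) i)
  have hE : ∀ p i, (hP p).1.eigenvalues i ≤ E := fun p i =>
    (le_ciSup (Finite.bddAbove_range _) i).trans
      (le_ciSup (f := fun p => ⨆ i, (hP p).1.eigenvalues i) (Finite.bddAbove_range _) p)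
  have he_pos : 0 < e := by
    obtain ⟨p₀, hp₀⟩ := exists_eq_ciInf_of_finite (f := fun p => ⨅ i, (hP p).1.eigenvalues i)
    obtain ⟨i₀, hi₀⟩ := exists_eq_ciInf_of_finite (f := (hP p₀).1.eigenvalues)
    exact ((hP p₀).eigenvalues_pos i₀).trans_eq (hi₀.trans hp₀)
  have hyz : e * ∑ i, y i ^ 2 ≤ e * (E / e * C * ∑ i, z i ^ 2) := by
    calc e * ∑ i, y i ^ 2 ≤ y ⬝ᵥ P p *ᵥ y := (hP p).1.mul_sum_sq_le_dotProduct_mulVec (he p) y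
      _ ≤ C * (z ⬝ᵥ P q *ᵥ z) := h
      _ ≤ C * (E * ∑ i, z i ^ 2) := by
          gcongr
          exact (hP q).1.dotProduct_mulVec_le_mul_sum_sq (hE q) z
      _ = e * (E / e * C * ∑ i, z i ^ 2) := by field_simp
  rw [← Real.sqrt_mul' _ hC, ← Real.sqrt_mul' _ (by positivity)]
  exact Real.sqrt_le_sqrt (le_of_mul_le_mul_left hyz he_pos)

open Finset in
theorem Function.Periodic.sum_range_mul_add {M : Type*} [AddCommMonoid M] {f : ℕ → M} {n : ℕ}
    (hf : Function.Periodic f n) (m j : ℕ) :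
    ∑ i ∈ range (m * n + j), f i = m • ∑ i ∈ range n, f i + ∑ i ∈ range j, f i := by
  have hshift : ∀ m j, ∑ i ∈ range j, f (m * n + i) = ∑ i ∈ range j, f i := fun m j =>
    sum_congr rfl fun i _ => by rw [add_comm]; exact hf.nat_mul m i
  have hperiods : ∀ m : ℕ, ∑ i ∈ range (m * n), f i = m • ∑ i ∈ range n, f i := by
    intro m
    induction m with
    | zero => simp
    | succ m ih => rw [add_mul, one_mul, sum_range_add, ih, hshift, succ_nsmul]
  rw [sum_range_add, hperiods, hshift]

theorem Fin.periodic_comp_natCast {α : Type*} {n : ℕ} [NeZero n] (g : Fin n → α) :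
    Function.Periodic (fun i : ℕ => g i) n := fun i => by simp

theorem Fin.sum_range_comp_natCast {M : Type*} [AddCommMonoid M] {n : ℕ} [NeZero n]
    (g : Fin n → M) : ∑ i ∈ Finset.range n, g i = ∑ j, g j := by
  simp [← Fin.sum_univ_eq_sum_range]

theorem exists_le_lt_succ_of_le_of_lt {α : Type*} [LinearOrder α] {τ : ℕ → α} {a b : ℕ} {t : α}
    (hab : a ≤ b) (ha : τ a ≤ t) (hb : t < τ b) :
    ∃ k, a ≤ k ∧ k < b ∧ τ k ≤ t ∧ t < τ (k + 1) := by
  induction b, hab using Nat.le_induction with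
  | base => exact absurd hb (not_lt.2 ha)
  | succ b hab ih =>
    by_cases hbt : τ b ≤ t
    · exact ⟨b, hab, b.lt_add_one, hbt, hb⟩
    · obtain ⟨k, hak, hkb, hk⟩ := ih (not_le.1 hbt)
      exact ⟨k, hak, hkb.trans b.lt_add_one, hk⟩

theorem le_exp_sum_range_mul_of_le_exp_mul_s14 {V a : ℕ → ℝ}
    (h : ∀ k, V (k + 1) ≤ Real.exp (a k) * V k) (k : ℕ) :
    V k ≤ Real.exp (∑ i ∈ Finset.range k, a i) * V 0 := by
  induction k with
  | zero => simp
  | succ k ih =>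
    calc V (k + 1) ≤ Real.exp (a k) * V k := h k
      _ ≤ Real.exp (a k) * (Real.exp (∑ i ∈ Finset.range k, a i) * V 0) := by gcongr
      _ = Real.exp (∑ i ∈ Finset.range (k + 1), a i) * V 0 := by
          rw [Finset.sum_range_succ, Real.exp_add]; ring

theorem add_sum_range_le_sum_range {a b : ℕ → ℝ} {c : ℝ} {j n : ℕ} (hjn : j < n)
    (hc : c ≤ b j) (hab : ∀ i < j, a i ≤ b i) (hb : ∀ i, 0 ≤ b i) :
    c + ∑ i ∈ Finset.range j, a i ≤ ∑ i ∈ Finset.range n, b i :=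
  calc c + ∑ i ∈ Finset.range j, a i ≤ b j + ∑ i ∈ Finset.range j, b i := by
        gcongr with i hi
        exact hab i (Finset.mem_range.1 hi)
    _ = ∑ i ∈ Finset.range (j + 1), b i := by rw [Finset.sum_range_succ, add_comm]
    _ ≤ ∑ i ∈ Finset.range n, b i :=
        Finset.sum_le_sum_of_subset_of_nonneg (Finset.range_subset_range.2 hjn) fun i _ _ => hb i

section SwitchedSystem

variable {d n : ℕ} [NeZero n] {Λ : Type*} {A P : Λ → Matrix (Fin d) (Fin d) ℝ} {lam : Λ → ℝ}
  {μ : Λ → Λ → ℝ} {v : Fin n → Λ} {T : Fin n → ℝ} {τ : ℕ → ℝ} {x : ℝ → Fin d → ℝ}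

def IsLyapunovMatrix (A P : Matrix (Fin d) (Fin d) ℝ) (lam : ℝ) : Prop :=
  ∀ t : ℝ, 0 ≤ t → ∀ ξ : Fin d → ℝ,
    NormedSpace.exp (t • A) *ᵥ ξ ⬝ᵥ P *ᵥ (NormedSpace.exp (t • A) *ᵥ ξ) ≤
      Real.exp (-lam * t) * (ξ ⬝ᵥ P *ᵥ ξ)

/-- The cast `(k : Fin n)` in `v k` is `k mod n`: the modes are visited cyclically. -/
def IsSwitchedTrajectory (A : Λ → Matrix (Fin d) (Fin d) ℝ) (v : Fin n → Λ) (τ : ℕ → ℝ)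
    (x : ℝ → Fin d → ℝ) : Prop :=
  ∀ k : ℕ, ∀ t : ℝ, τ k ≤ t → t ≤ τ (k + 1) →
    x t = NormedSpace.exp ((t - τ k) • A (v k)) *ᵥ x (τ k)

theorem switchingTime_mul (hτ0 : τ 0 = 0) (hτ : ∀ k : ℕ, τ (k + 1) = τ k + T k) (m : ℕ) :
    τ (m * n) = m * ∑ j, T j := by
  rw [← Finset.sum_range_induction _ τ hτ0 _ fun k _ => hτ k, ← add_zero (m * n),
    (Fin.periodic_comp_natCast T).sum_range_mul_add, Finset.sum_range_zero, add_zero,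
    nsmul_eq_mul, Fin.sum_range_comp_natCast]

theorem lyapunov_le_of_mem_Icc (hdecay : ∀ p, IsLyapunovMatrix (A p) (P p) (lam p))
    (hx : IsSwitchedTrajectory A v τ x) {k : ℕ} {t : ℝ} (hkt : τ k ≤ t) (htk : t ≤ τ (k + 1)) :
    x t ⬝ᵥ P (v k) *ᵥ x t ≤
      Real.exp (-lam (v k) * (t - τ k)) * (x (τ k) ⬝ᵥ P (v k) *ᵥ x (τ k)) := by
  rw [hx k t hkt htk]
  exact hdecay _ _ (sub_nonneg.2 hkt) _

theorem lyapunov_switch_le (hdecay : ∀ p, IsLyapunovMatrix (A p) (P p) (lam p))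
    (hμ1 : ∀ p q, 1 ≤ μ p q) (hμ : ∀ p q, ∀ ξ : Fin d → ℝ, ξ ⬝ᵥ P q *ᵥ ξ ≤ μ p q * (ξ ⬝ᵥ P p *ᵥ ξ))
    (hT : ∀ j, 0 ≤ T j) (hτ : ∀ k : ℕ, τ (k + 1) = τ k + T k) (hx : IsSwitchedTrajectory A v τ x)
    (k : ℕ) :
    x (τ (k + 1)) ⬝ᵥ P (v (k + 1 : ℕ)) *ᵥ x (τ (k + 1)) ≤
      Real.exp (-lam (v k) * T k + Real.log (μ (v k) (v ((k : Fin n) + 1)))) *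
        (x (τ k) ⬝ᵥ P (v k) *ᵥ x (τ k)) := by
  have hτk : τ k ≤ τ (k + 1) := by rw [hτ]; linarith [hT k]
  have hflow := lyapunov_le_of_mem_Icc hdecay hx hτk le_rfl
  rw [show τ (k + 1) - τ k = T k by rw [hτ]; ring] at hflow
  calc x (τ (k + 1)) ⬝ᵥ P (v (k + 1 : ℕ)) *ᵥ x (τ (k + 1))
      ≤ μ (v k) (v ((k : Fin n) + 1)) * (x (τ (k + 1)) ⬝ᵥ P (v k) *ᵥ x (τ (k + 1))) := by
        rw [Nat.cast_succ]; exact hμ _ _ _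
    _ ≤ μ (v k) (v ((k : Fin n) + 1)) *
          (Real.exp (-lam (v k) * T k) * (x (τ k) ⬝ᵥ P (v k) *ᵥ x (τ k))) :=
        mul_le_mul_of_nonneg_left hflow (zero_le_one.trans (hμ1 _ _))
    _ = _ := by rw [Real.exp_add, Real.exp_log (one_pos.trans_le (hμ1 _ _))]; ring

theorem lyapunov_switchingTime_le (hdecay : ∀ p, IsLyapunovMatrix (A p) (P p) (lam p))
    (hμ1 : ∀ p q, 1 ≤ μ p q) (hμ : ∀ p q, ∀ ξ : Fin d → ℝ, ξ ⬝ᵥ P q *ᵥ ξ ≤ μ p q * (ξ ⬝ᵥ P p *ᵥ ξ))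
    (hT : ∀ j, 0 ≤ T j) (hτ : ∀ k : ℕ, τ (k + 1) = τ k + T k) (hx : IsSwitchedTrajectory A v τ x)
    (k : ℕ) :
    x (τ k) ⬝ᵥ P (v k) *ᵥ x (τ k) ≤
      Real.exp (∑ i ∈ Finset.range k,
          (-lam (v i) * T i + Real.log (μ (v i) (v ((i : Fin n) + 1))))) *
        (x (τ 0) ⬝ᵥ P (v 0) *ᵥ x (τ 0)) := by
  have := le_exp_sum_range_mul_of_le_exp_mul_s14
    (V := fun k => x (τ k) ⬝ᵥ P (v k) *ᵥ x (τ k)) (lyapunov_switch_le hdecay hμ1 hμ hT hτ hx) k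
  rwa [Nat.cast_zero] at this

theorem lyapunov_le_of_mem_period (hP : ∀ p, (P p).PosSemidef)
    (hdecay : ∀ p, IsLyapunovMatrix (A p) (P p) (lam p))
    (hμ1 : ∀ p q, 1 ≤ μ p q) (hμ : ∀ p q, ∀ ξ : Fin d → ℝ, ξ ⬝ᵥ P q *ᵥ ξ ≤ μ p q * (ξ ⬝ᵥ P p *ᵥ ξ))
    (hT : ∀ j, 0 ≤ T j) (hτ : ∀ k : ℕ, τ (k + 1) = τ k + T k) (hx : IsSwitchedTrajectory A v τ x)
    {m j : ℕ} (hj : j < n) {t : ℝ} (hkt : τ (m * n + j) ≤ t) (htk : t ≤ τ (m * n + j + 1)) :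
    x t ⬝ᵥ P (v (m * n + j : ℕ)) *ᵥ x t ≤
      Real.exp (∑ j, |lam (v j)| * T j + ∑ j, Real.log (μ (v j) (v (j + 1)))) *
        Real.exp (∑ j, (-lam (v j) * T j) + ∑ j, Real.log (μ (v j) (v (j + 1)))) ^ m *
        (x (τ 0) ⬝ᵥ P (v 0) *ᵥ x (τ 0)) := by
  set k := m * n + j
  set a : Fin n → ℝ := fun i => -lam (v i) * T i + Real.log (μ (v i) (v (i + 1)))
  set b : Fin n → ℝ := fun i => |lam (v i)| * T i + Real.log (μ (v i) (v (i + 1)))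
  have hkj : (k : Fin n) = j := by simp [k]
  have hdwell : t - τ k ≤ T j := by rw [← hkj]; linarith [hτ k]
  have hlast : -lam (v k) * (t - τ k) + ∑ i ∈ Finset.range j, a i ≤ ∑ i, b i := by
    rw [← Fin.sum_range_comp_natCast b]
    refine add_sum_range_le_sum_range hj ?_ (fun i _ => ?_) (fun i => ?_)
    · rw [hkj]
      calc -lam (v j) * (t - τ k) ≤ |lam (v j)| * (t - τ k) := by
            gcongr
            exact neg_le_abs _
        _ ≤ |lam (v j)| * T j := by gcongr
        _ ≤ b j := le_add_of_nonneg_right (Real.log_nonneg (hμ1 _ _))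
    · simp only [a, b]
      gcongr
      · exact hT _
      · exact neg_le_abs _
    · exact add_nonneg (mul_nonneg (abs_nonneg _) (hT _)) (Real.log_nonneg (hμ1 _ _))
  have hexp : -lam (v k) * (t - τ k) + ∑ i ∈ Finset.range k, a i ≤ ∑ i, b i + m * ∑ i, a i := by
    rw [(Fin.periodic_comp_natCast a).sum_range_mul_add, nsmul_eq_mul, Fin.sum_range_comp_natCast]
    linarith
  calc x t ⬝ᵥ P (v k) *ᵥ x t
      ≤ Real.exp (-lam (v k) * (t - τ k)) * (x (τ k) ⬝ᵥ P (v k) *ᵥ x (τ k)) :=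
        lyapunov_le_of_mem_Icc hdecay hx hkt htk
    _ ≤ Real.exp (-lam (v k) * (t - τ k)) *
          (Real.exp (∑ i ∈ Finset.range k, a i) * (x (τ 0) ⬝ᵥ P (v 0) *ᵥ x (τ 0))) := by
        gcongr
        exact lyapunov_switchingTime_le hdecay hμ1 hμ hT hτ hx k
    _ = Real.exp (-lam (v k) * (t - τ k) + ∑ i ∈ Finset.range k, a i) *
          (x (τ 0) ⬝ᵥ P (v 0) *ᵥ x (τ 0)) := by rw [Real.exp_add, mul_assoc]
    _ ≤ Real.exp (∑ i, b i + m * ∑ i, a i) * (x (τ 0) ⬝ᵥ P (v 0) *ᵥ x (τ 0)) := by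
        gcongr
        simpa using (hP (v 0)).dotProduct_mulVec_nonneg (x (τ 0))
    _ = _ := by
        rw [Real.exp_add, Real.exp_nat_mul]
        simp only [a, b, Finset.sum_add_distrib]

end SwitchedSystem

theorem stmt_14_general {d n : ℕ} [NeZero n] {Λ : Type} [Fintype Λ]
    (A : Λ → Matrix (Fin d) (Fin d) ℝ)
    (P : Λ → Matrix (Fin d) (Fin d) ℝ)
    (lam : Λ → ℝ)
    (hP : ∀ p, (P p).PosDef)
    (hdecay : ∀ p, ∀ t : ℝ, 0 ≤ t → ∀ ξ : Fin d → ℝ,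
      (NormedSpace.exp (t • A p)).mulVec ξ ⬝ᵥ
          (P p).mulVec ((NormedSpace.exp (t • A p)).mulVec ξ)
        ≤ Real.exp (-lam p * t) * (ξ ⬝ᵥ (P p).mulVec ξ))
    (μ : Λ → Λ → ℝ) (hμ1 : ∀ p q, 1 ≤ μ p q)
    (hμ : ∀ p q, ∀ ξ : Fin d → ℝ, ξ ⬝ᵥ (P q).mulVec ξ ≤ μ p q * (ξ ⬝ᵥ (P p).mulVec ξ))
    (v : Fin n → Λ) (T : Fin n → ℝ) (hT : ∀ j, 0 < T j)
    (τ : ℕ → ℝ) (hτ0 : τ 0 = 0) (hτ : ∀ k : ℕ, τ (k + 1) = τ k + T (k : Fin n))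
    (x0 : Fin d → ℝ) (x : ℝ → Fin d → ℝ) (hx0 : x 0 = x0)
    (hx : ∀ k : ℕ, ∀ t : ℝ, τ k ≤ t → t ≤ τ (k + 1) →
      x t = (NormedSpace.exp ((t - τ k) • A (v (k : Fin n)))).mulVec (x (τ k))) :
    ∀ m : ℕ, ∀ t : ℝ, (m : ℝ) * (∑ j, T j) ≤ t → t < ((m : ℝ) + 1) * (∑ j, T j) →
      Real.sqrt (∑ i, x t i ^ 2) ≤
        Real.sqrt ((⨆ p, ⨆ i, (hP p).1.eigenvalues i) / (⨅ p, ⨅ i, (hP p).1.eigenvalues i)) *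
          Real.sqrt
            (Real.exp (∑ j, |lam (v j)| * T j + ∑ j, Real.log (μ (v j) (v (j + 1)))) *
              Real.exp (∑ j, (-lam (v j) * T j) + ∑ j, Real.log (μ (v j) (v (j + 1)))) ^ m) *
          Real.sqrt (∑ i, x0 i ^ 2) := by
  intro m t hmt htm
  have hperiod : ∀ m' : ℕ, τ (m' * n) = m' * ∑ j, T j := switchingTime_mul hτ0 hτ
  obtain ⟨k, hmk, hkm, hkt, htk⟩ := exists_le_lt_succ_of_le_of_lt (τ := τ) (t := t)
    (Nat.le_add_right (m * n) n) (by rwa [hperiod])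
    (by rwa [← Nat.succ_mul, hperiod, Nat.cast_succ])
  obtain ⟨j, rfl⟩ := Nat.exists_eq_add_of_le hmk
  have hV := lyapunov_le_of_mem_period (fun p => (hP p).posSemidef) hdecay hμ1 hμ
    (fun j => (hT j).le) hτ hx (by omega) hkt htk.le
  rw [hτ0, hx0] at hV
  exact sqrt_sum_sq_le_of_dotProduct_mulVec_le hP (by positivity) hV

theorem stmt_14 {d n : ℕ} [NeZero n] {Λ : Type} [Fintype Λ] [Nonempty Λ]
    (A : Λ → Matrix (Fin d) (Fin d) ℝ)
    (P : Λ → Matrix (Fin d) (Fin d) ℝ)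
    (lam : Λ → ℝ)
    (hP : ∀ p, (P p).PosDef)
    (hdecay : ∀ p, ∀ t : ℝ, 0 ≤ t → ∀ ξ : Fin d → ℝ,
      (NormedSpace.exp (t • A p)).mulVec ξ ⬝ᵥ
          (P p).mulVec ((NormedSpace.exp (t • A p)).mulVec ξ)
        ≤ Real.exp (-lam p * t) * (ξ ⬝ᵥ (P p).mulVec ξ))
    (μ : Λ → Λ → ℝ) (hμ1 : ∀ p q, 1 ≤ μ p q)
    (hμ : ∀ p q, ∀ ξ : Fin d → ℝ, ξ ⬝ᵥ (P q).mulVec ξ ≤ μ p q * (ξ ⬝ᵥ (P p).mulVec ξ))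
    (v : Fin n → Λ) (T : Fin n → ℝ) (hT : ∀ j, 0 < T j)
    (hcontract : ∑ j, (-lam (v j) * T j) + ∑ j, Real.log (μ (v j) (v (j + 1))) < 0)
    (τ : ℕ → ℝ) (hτ0 : τ 0 = 0) (hτ : ∀ k : ℕ, τ (k + 1) = τ k + T (k : Fin n))
    (x0 : Fin d → ℝ) (x : ℝ → Fin d → ℝ) (hx0 : x 0 = x0)
    (hx : ∀ k : ℕ, ∀ t : ℝ, τ k ≤ t → t ≤ τ (k + 1) →
      x t = (NormedSpace.exp ((t - τ k) • A (v (k : Fin n)))).mulVec (x (τ k))) :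
    ∀ m : ℕ, ∀ t : ℝ, (m : ℝ) * (∑ j, T j) ≤ t → t < ((m : ℝ) + 1) * (∑ j, T j) →
      Real.sqrt (∑ i, x t i ^ 2) ≤
        Real.sqrt ((⨆ p, ⨆ i, (hP p).1.eigenvalues i) / (⨅ p, ⨅ i, (hP p).1.eigenvalues i)) *
          Real.sqrt
            (Real.exp (∑ j, |lam (v j)| * T j + ∑ j, Real.log (μ (v j) (v (j + 1)))) *
              Real.exp (∑ j, (-lam (v j) * T j) + ∑ j, Real.log (μ (v j) (v (j + 1)))) ^ m) *
          Real.sqrt (∑ i, x0 i ^ 2) :=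
  stmt_14_general A P lam hP hdecay μ hμ1 hμ v T hT τ hτ0 hτ x0 x hx0 hx
end

section
/- Let A_s, A_u ∈ ℝ^{d×d}, let P_s, P_u ∈ ℝ^{d×d} be symmetric positive definite, and let λ_s > 0 and λ_u ≤ 0 be such that for all t ≥ 0 and ξ ∈ ℝ^d: (exp(t·A_s)·ξ)ᵀ P_s (exp(t·A_s)·ξ) ≤ exp(−λ_s·t)·ξᵀP_sξ and (exp(t·A_u)·ξ)ᵀ P_u (exp(t·A_u)·ξ) ≤ exp(−λ_u·t)·ξᵀP_uξ. Let μ_su, μ_us ≥ 1 satisfy ξᵀP_uξ ≤ μ_su·ξᵀP_sξ and ξᵀP_sξ ≤ μ_us·ξᵀP_uξ for all ξ ∈ ℝ^d. Suppose T_s, T_u > 0 satisfy −λ_s·T_s − λ_u·T_u + ln μ_su + ln μ_us < 0. Then, with M := exp(T_u·A_u)·exp(T_s·A_s) and ρ := μ_su·μ_us·exp(−λ_s·T_s − λ_u·T_u), we have ρ < 1, (M^m x)ᵀ P_s (M^m x) ≤ ρ^m · xᵀP_sx for all x ∈ ℝ^d and m ∈ ℕ, and M^m x → 0 as m → ∞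 for every x ∈ ℝ^d. -/
open Matrix

/-!
Write `q_s ξ = ξᵀ P_s ξ` and `q_u ξ = ξᵀ P_u ξ`. Along one period of the cycle, `q_s` decays by
`exp(-λ_s T_s)` during the stable phase, switching to `q_u` costs a factor `μ_su`, `q_u` grows by at
most `exp(-λ_u T_u)` during the unstable phase, and switching back costs `μ_us`. Hence
`q_s (M ξ) ≤ ρ q_s ξ`, and iterating gives `q_s (M^m x) ≤ ρ^m q_s x`; the condition on `T_s, T_u` is
exactly `log ρ < 0`. Since `P_s` is positive definite, `q_s` dominates `c ‖·‖²` for some `c > 0`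
(minimise `q_s` over the unit sphere), so `M^m x → 0`.
-/

open Filter Topology

namespace Matrix

variable {n : Type*} [Fintype n]

lemma smul_dotProduct_mulVec_smul (P : Matrix n n ℝ) (c : ℝ) (v : n → ℝ) :
    c • v ⬝ᵥ P *ᵥ (c • v) = c ^ 2 * (v ⬝ᵥ P *ᵥ v) := by
  rw [mulVec_smul, dotProduct_smul, smul_dotProduct, smul_eq_mul, smul_eq_mul]
  ring

lemma PosDef.exists_pos_mul_sq_norm_le {P : Matrix n n ℝ} (hP : P.PosDef) :
    ∃ c > 0, ∀ v : n → ℝ, c * ‖v‖ ^ 2 ≤ v ⬝ᵥ P *ᵥ v := by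
  rcases subsingleton_or_nontrivial (n → ℝ) with _ | _
  · exact ⟨1, one_pos, fun v => by simp [Subsingleton.elim v 0]⟩
  have hcont : Continuous fun v : n → ℝ => v ⬝ᵥ P *ᵥ v :=
    continuous_id.dotProduct (continuous_const.matrix_mulVec continuous_id)
  obtain ⟨u, hu, hmin⟩ := (isCompact_sphere (0 : n → ℝ) 1).exists_isMinOn
    (NormedSpace.sphere_nonempty.mpr zero_le_one) hcont.continuousOn
  refine ⟨u ⬝ᵥ P *ᵥ u, hP.dotProduct_mulVec_pos (ne_zero_of_mem_unit_sphere ⟨u, hu⟩), fun v => ?_⟩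
  rcases eq_or_ne v 0 with rfl | hv
  · simp
  have hnorm : 0 < ‖v‖ := norm_pos_iff.mpr hv
  have hw : ‖v‖⁻¹ • v ∈ Metric.sphere (0 : n → ℝ) 1 := by
    simp [norm_smul, hnorm.ne']
  have hle : u ⬝ᵥ P *ᵥ u ≤ (‖v‖⁻¹) ^ 2 * (v ⬝ᵥ P *ᵥ v) := by
    simpa only [smul_dotProduct_mulVec_smul] using isMinOn_iff.mp hmin _ hw
  calc u ⬝ᵥ P *ᵥ u * ‖v‖ ^ 2 ≤ (‖v‖⁻¹) ^ 2 * (v ⬝ᵥ P *ᵥ v) * ‖v‖ ^ 2 := by gcongr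
    _ = v ⬝ᵥ P *ᵥ v := by field_simp

lemma PosDef.tendsto_zero_of_tendsto_dotProduct_mulVec {ι : Type*} {l : Filter ι}
    {P : Matrix n n ℝ} (hP : P.PosDef) {v : ι → n → ℝ}
    (hv : Tendsto (fun i => v i ⬝ᵥ P *ᵥ v i) l (𝓝 0)) : Tendsto v l (𝓝 0) := by
  obtain ⟨c, hc, hcoer⟩ := hP.exists_pos_mul_sq_norm_le
  have hsq : Tendsto (fun i => ‖v i‖ ^ 2) l (𝓝 0) := by
    refine squeeze_zero (fun i => sq_nonneg _) (fun i => ?_) (by simpa using hv.div_const c)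
    rw [le_div_iff₀ hc, mul_comm]
    exact hcoer (v i)
  rw [tendsto_zero_iff_norm_tendsto_zero]
  simpa using hsq.sqrt

lemma dotProduct_mulVec_mul_mulVec_le {P Q A B : Matrix n n ℝ} {α β μ ν : ℝ}
    (hβ : 0 ≤ β) (hμ : 0 ≤ μ) (hν : 0 ≤ ν)
    (hA : ∀ ξ, A *ᵥ ξ ⬝ᵥ P *ᵥ (A *ᵥ ξ) ≤ α * (ξ ⬝ᵥ P *ᵥ ξ))
    (hPQ : ∀ ξ, ξ ⬝ᵥ Q *ᵥ ξ ≤ μ * (ξ ⬝ᵥ P *ᵥ ξ))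
    (hB : ∀ ξ, B *ᵥ ξ ⬝ᵥ Q *ᵥ (B *ᵥ ξ) ≤ β * (ξ ⬝ᵥ Q *ᵥ ξ))
    (hQP : ∀ ξ, ξ ⬝ᵥ P *ᵥ ξ ≤ ν * (ξ ⬝ᵥ Q *ᵥ ξ)) (ξ : n → ℝ) :
    (B * A) *ᵥ ξ ⬝ᵥ P *ᵥ ((B * A) *ᵥ ξ) ≤ ν * β * μ * α * (ξ ⬝ᵥ P *ᵥ ξ) := by
  rw [← mulVec_mulVec]
  calc B *ᵥ (A *ᵥ ξ) ⬝ᵥ P *ᵥ (B *ᵥ (A *ᵥ ξ))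
      ≤ ν * (B *ᵥ (A *ᵥ ξ) ⬝ᵥ Q *ᵥ (B *ᵥ (A *ᵥ ξ))) := hQP _
    _ ≤ ν * (β * (A *ᵥ ξ ⬝ᵥ Q *ᵥ (A *ᵥ ξ))) := by gcongr; exact hB _
    _ ≤ ν * (β * (μ * (A *ᵥ ξ ⬝ᵥ P *ᵥ (A *ᵥ ξ)))) := by gcongr; exact hPQ _
    _ ≤ ν * (β * (μ * (α * (ξ ⬝ᵥ P *ᵥ ξ)))) := by gcongr; exact hA _
    _ = ν * β * μ * α * (ξ ⬝ᵥ P *ᵥ ξ) := by ring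

variable [DecidableEq n]

lemma dotProduct_mulVec_pow_mulVec_le {P M : Matrix n n ℝ} {ρ : ℝ} (hρ : 0 ≤ ρ)
    (hM : ∀ ξ, M *ᵥ ξ ⬝ᵥ P *ᵥ (M *ᵥ ξ) ≤ ρ * (ξ ⬝ᵥ P *ᵥ ξ)) (x : n → ℝ) (m : ℕ) :
    (M ^ m) *ᵥ x ⬝ᵥ P *ᵥ ((M ^ m) *ᵥ x) ≤ ρ ^ m * (x ⬝ᵥ P *ᵥ x) := by
  induction m with
  | zero => simp
  | succ m ih =>
    calc (M ^ (m + 1)) *ᵥ x ⬝ᵥ P *ᵥ ((M ^ (m + 1)) *ᵥ x)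
        ≤ ρ * ((M ^ m) *ᵥ x ⬝ᵥ P *ᵥ ((M ^ m) *ᵥ x)) := by
          rw [pow_succ', ← mulVec_mulVec]; exact hM _
      _ ≤ ρ * (ρ ^ m * (x ⬝ᵥ P *ᵥ x)) := by gcongr
      _ = ρ ^ (m + 1) * (x ⬝ᵥ P *ᵥ x) := by ring

lemma PosDef.tendsto_pow_mulVec_zero {P M : Matrix n n ℝ} (hP : P.PosDef) {ρ : ℝ}
    (hρ₀ : 0 ≤ ρ) (hρ₁ : ρ < 1) (hM : ∀ ξ, M *ᵥ ξ ⬝ᵥ P *ᵥ (M *ᵥ ξ) ≤ ρ * (ξ ⬝ᵥ P *ᵥ ξ))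
    (x : n → ℝ) : Tendsto (fun m : ℕ => (M ^ m) *ᵥ x) atTop (𝓝 0) := by
  refine hP.tendsto_zero_of_tendsto_dotProduct_mulVec (squeeze_zero
    (fun m => hP.posSemidef.dotProduct_mulVec_nonneg _) (dotProduct_mulVec_pow_mulVec_le hρ₀ hM x)
    ?_)
  simpa using (tendsto_pow_atTop_nhds_zero_of_lt_one hρ₀ hρ₁).mul_const (x ⬝ᵥ P *ᵥ x)

end Matrix

lemma mul_mul_exp_lt_one_of_add_log_add_log_neg {μ ν a : ℝ} (hμ : 0 < μ) (hν : 0 < ν)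
    (h : a + Real.log μ + Real.log ν < 0) : μ * ν * Real.exp a < 1 := by
  calc μ * ν * Real.exp a = Real.exp (a + Real.log μ + Real.log ν) := by
        rw [Real.exp_add, Real.exp_add, Real.exp_log hμ, Real.exp_log hν]; ring
    _ < 1 := Real.exp_lt_one_iff.mpr h

theorem stmt_15_general {d : ℕ} (As Au : Matrix (Fin d) (Fin d) ℝ)
    (Ps Pu : Matrix (Fin d) (Fin d) ℝ)
    (hPs : Ps.PosDef)
    (lams lamu : ℝ)
    (hdecs : ∀ t : ℝ, 0 ≤ t → ∀ ξ : Fin d → ℝ,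
      (NormedSpace.exp (t • As)).mulVec ξ ⬝ᵥ
          Ps.mulVec ((NormedSpace.exp (t • As)).mulVec ξ)
        ≤ Real.exp (-lams * t) * (ξ ⬝ᵥ Ps.mulVec ξ))
    (hdecu : ∀ t : ℝ, 0 ≤ t → ∀ ξ : Fin d → ℝ,
      (NormedSpace.exp (t • Au)).mulVec ξ ⬝ᵥ
          Pu.mulVec ((NormedSpace.exp (t • Au)).mulVec ξ)
        ≤ Real.exp (-lamu * t) * (ξ ⬝ᵥ Pu.mulVec ξ))
    (μsu μus : ℝ) (hμsu1 : 1 ≤ μsu) (hμus1 : 1 ≤ μus)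
    (hμsu : ∀ ξ : Fin d → ℝ, ξ ⬝ᵥ Pu.mulVec ξ ≤ μsu * (ξ ⬝ᵥ Ps.mulVec ξ))
    (hμus : ∀ ξ : Fin d → ℝ, ξ ⬝ᵥ Ps.mulVec ξ ≤ μus * (ξ ⬝ᵥ Pu.mulVec ξ))
    (Ts Tu : ℝ) (hTs : 0 < Ts) (hTu : 0 < Tu)
    (hcontract : -lams * Ts - lamu * Tu + Real.log μsu + Real.log μus < 0) :
    μsu * μus * Real.exp (-lams * Ts - lamu * Tu) < 1 ∧
    (∀ (x : Fin d → ℝ) (m : ℕ),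
      (((NormedSpace.exp (Tu • Au) * NormedSpace.exp (Ts • As)) ^ m).mulVec x) ⬝ᵥ
          Ps.mulVec (((NormedSpace.exp (Tu • Au) * NormedSpace.exp (Ts • As)) ^ m).mulVec x)
        ≤ (μsu * μus * Real.exp (-lams * Ts - lamu * Tu)) ^ m * (x ⬝ᵥ Ps.mulVec x)) ∧
    (∀ x : Fin d → ℝ,
      Filter.Tendsto
        (fun m : ℕ =>
          ((NormedSpace.exp (Tu • Au) * NormedSpace.exp (Ts • As)) ^ m).mulVec x)
        Filter.atTop (nhds 0)) := by
  have hρ₀ : 0 ≤ μsu * μus * Real.exp (-lams * Ts - lamu * Tu) := by positivity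
  have hρ₁ := mul_mul_exp_lt_one_of_add_log_add_log_neg (by linarith) (by linarith) hcontract
  have hstep (ξ : Fin d → ℝ) :
      (NormedSpace.exp (Tu • Au) * NormedSpace.exp (Ts • As)) *ᵥ ξ ⬝ᵥ
          Ps *ᵥ ((NormedSpace.exp (Tu • Au) * NormedSpace.exp (Ts • As)) *ᵥ ξ)
        ≤ μsu * μus * Real.exp (-lams * Ts - lamu * Tu) * (ξ ⬝ᵥ Ps *ᵥ ξ) := by
    convert dotProduct_mulVec_mul_mulVec_le (Real.exp_nonneg _) (by linarith) (by linarith)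
      (hdecs Ts hTs.le) hμsu (hdecu Tu hTu.le) hμus ξ using 2
    rw [sub_eq_add_neg, Real.exp_add, neg_mul_eq_neg_mul lamu]
    ring
  exact ⟨hρ₁, dotProduct_mulVec_pow_mulVec_le hρ₀ hstep, hPs.tendsto_pow_mulVec_zero hρ₀ hρ₁ hstep⟩

theorem stmt_15 {d : ℕ} (As Au : Matrix (Fin d) (Fin d) ℝ)
    (Ps Pu : Matrix (Fin d) (Fin d) ℝ)
    (hPs : Ps.PosDef) (hPu : Pu.PosDef)
    (lams lamu : ℝ) (hlams : 0 < lams) (hlamu : lamu ≤ 0)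
    (hdecs : ∀ t : ℝ, 0 ≤ t → ∀ ξ : Fin d → ℝ,
      (NormedSpace.exp (t • As)).mulVec ξ ⬝ᵥ
          Ps.mulVec ((NormedSpace.exp (t • As)).mulVec ξ)
        ≤ Real.exp (-lams * t) * (ξ ⬝ᵥ Ps.mulVec ξ))
    (hdecu : ∀ t : ℝ, 0 ≤ t → ∀ ξ : Fin d → ℝ,
      (NormedSpace.exp (t • Au)).mulVec ξ ⬝ᵥ
          Pu.mulVec ((NormedSpace.exp (t • Au)).mulVec ξ)
        ≤ Real.exp (-lamu * t) * (ξ ⬝ᵥ Pu.mulVec ξ))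
    (μsu μus : ℝ) (hμsu1 : 1 ≤ μsu) (hμus1 : 1 ≤ μus)
    (hμsu : ∀ ξ : Fin d → ℝ, ξ ⬝ᵥ Pu.mulVec ξ ≤ μsu * (ξ ⬝ᵥ Ps.mulVec ξ))
    (hμus : ∀ ξ : Fin d → ℝ, ξ ⬝ᵥ Ps.mulVec ξ ≤ μus * (ξ ⬝ᵥ Pu.mulVec ξ))
    (Ts Tu : ℝ) (hTs : 0 < Ts) (hTu : 0 < Tu)
    (hcontract : -lams * Ts - lamu * Tu + Real.log μsu + Real.log μus < 0) :
    μsu * μus * Real.exp (-lams * Ts - lamu * Tu) < 1 ∧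
    (∀ (x : Fin d → ℝ) (m : ℕ),
      (((NormedSpace.exp (Tu • Au) * NormedSpace.exp (Ts • As)) ^ m).mulVec x) ⬝ᵥ
          Ps.mulVec (((NormedSpace.exp (Tu • Au) * NormedSpace.exp (Ts • As)) ^ m).mulVec x)
        ≤ (μsu * μus * Real.exp (-lams * Ts - lamu * Tu)) ^ m * (x ⬝ᵥ Ps.mulVec x)) ∧
    (∀ x : Fin d → ℝ,
      Filter.Tendsto
        (fun m : ℕ =>
          ((NormedSpace.exp (Tu • Au) * NormedSpace.exp (Ts • As)) ^ m).mulVec x)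
        Filter.atTop (nhds 0)) :=
  stmt_15_general As Au Ps Pu hPs lams lamu hdecs hdecu μsu μus hμsu1 hμus1 hμsu hμus Ts Tu hTs hTu
    hcontract
end
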